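/- arXiv:1108.3209 — 8 statements merged into one kernel-verified Lean document; each statement's English description precedes it below -/
import Mathlib

section
/- Let R be a (not necessarily unital) commutative k-algebra such that either Ann(R) = {x ∈ R : x r = 0 for all r ∈ R} is zero or R·R = R (every element of R is a sum of products). Let M(R) be the set of k-linear maps δ : R → R with δ(r r') = r δ(r') for all r, r' ∈ R (the multiplication algebra of R). Then: (i) M(R) is closed under composition and is a commutative k-subalgebra of the k-linear endomorphisms of R; (ii) μ : R → M(R) defined by μ(r)(r') = r r' is a k-algebra morphism; (iii) with M(R) acting on R by δ·r = δ(r), the triple (R, M(R), μ) is a crossed module: δ·(r r') = (δ·r) r', μ(δ·r) = δ ∘ μ(r), and μ(r)·r' = r r' for all δ ∈ M(R) and r, r' ∈ R. -/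
/-! Basic notions: (not necessarily unital) commutative `k`-algebra structures given by a raw
multiplication on a `k`-module, morphisms of such, actions, (pre)crossed modules and
2-crossed modules of commutative `k`-algebras, and their morphisms. -/

section Defs

variable (k : Type*) [CommRing k]

/-- A raw multiplication `mul` turns the `k`-module `A` into a (not necessarily unital)
commutative `k`-algebra. -/
structure IsCommAlgebraStr {A : Type*} [AddCommGroup A] [Module k A]
    (mul : A → A → A) : Prop where
  comm : ∀ x y, mul x y = mul y x
  assoc : ∀ x y z, mul (mul x y) z = mul x (mul y z)
  add_left : ∀ x y z, mul (x + y) z = mul x z + mul y z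
  add_right : ∀ x y z, mul x (y + z) = mul x y + mul x z
  smul_left : ∀ (a : k) (x y : A), mul (a • x) y = a • mul x y
  smul_right : ∀ (a : k) (x y : A), mul x (a • y) = a • mul x y

/-- `f` is a morphism of (not necessarily unital) commutative `k`-algebras from
`(A, mulA)` to `(B, mulB)`. -/
structure IsAlgHomStr {A B : Type*} [AddCommGroup A] [Module k A] [AddCommGroup B] [Module k B]
    (mulA : A → A → A) (mulB : B → B → B) (f : A → B) : Prop where
  map_add : ∀ x y, f (x + y) = f x + f y
  map_smul : ∀ (a : k) (x : A), f (a • x) = a • f x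
  map_mul : ∀ x y, f (mulA x y) = mulB (f x) (f y)

/-- `act` is a `k`-bilinear action of the algebra `(R, mulR)` on the algebra `(A, mulA)`
making `A` an `R`-module and satisfying `r · (x x') = (r · x) x'`. -/
structure IsActionStr {R A : Type*} [AddCommGroup R] [Module k R] [AddCommGroup A] [Module k A]
    (mulR : R → R → R) (mulA : A → A → A) (act : R → A → A) : Prop where
  add_left : ∀ (r r' : R) (x : A), act (r + r') x = act r x + act r' x
  add_right : ∀ (r : R) (x y : A), act r (x + y) = act r x + act r y
  smul_left : ∀ (a : k) (r : R) (x : A), act (a • r) x = a • act r x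
  smul_right : ∀ (a : k) (r : R) (x : A), act r (a • x) = a • act r x
  mul_act : ∀ (r r' : R) (x : A), act (mulR r r') x = act r (act r' x)
  act_mul : ∀ (r : R) (x y : A), act r (mulA x y) = mulA (act r x) y

/-- `(C, R, d)` is a pre-crossed module of commutative `k`-algebras with action `act`. -/
structure IsPreCrossedModule {C R : Type*} [AddCommGroup C] [Module k C]
    [AddCommGroup R] [Module k R]
    (mulC : C → C → C) (mulR : R → R → R) (d : C → R) (act : R → C → C) : Prop where
  algC : IsCommAlgebraStr k mulC
  algR : IsCommAlgebraStr k mulR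
  hom : IsAlgHomStr k mulC mulR d
  action : IsActionStr k mulR mulC act
  equivariant : ∀ (r : R) (c : C), d (act r c) = mulR r (d c)

/-- `(C, R, d)` is a crossed module of commutative `k`-algebras with action `act`. -/
structure IsCrossedModule {C R : Type*} [AddCommGroup C] [Module k C]
    [AddCommGroup R] [Module k R]
    (mulC : C → C → C) (mulR : R → R → R) (d : C → R) (act : R → C → C)
    extends IsPreCrossedModule k mulC mulR d act : Prop where
  peiffer : ∀ c c' : C, act (d c) c' = mulC c c'

/-- `{L, M, P, d2, d1}` is a 2-crossed module of commutative `k`-algebras, with `P`-actions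
`actL`, `actM` on `L` and `M` and Peiffer lifting `pf`. -/
structure IsTwoCrossedModule {L M P : Type*} [AddCommGroup L] [Module k L]
    [AddCommGroup M] [Module k M] [AddCommGroup P] [Module k P]
    (mulL : L → L → L) (mulM : M → M → M) (mulP : P → P → P)
    (d2 : L → M) (d1 : M → P)
    (actL : P → L → L) (actM : P → M → M)
    (pf : M → M → L) : Prop where
  algL : IsCommAlgebraStr k mulL
  algM : IsCommAlgebraStr k mulM
  algP : IsCommAlgebraStr k mulP
  homD2 : IsAlgHomStr k mulL mulM d2
  homD1 : IsAlgHomStr k mulM mulP d1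
  d1_d2 : ∀ l : L, d1 (d2 l) = 0
  actionL : IsActionStr k mulP mulL actL
  actionM : IsActionStr k mulP mulM actM
  d2_equivariant : ∀ (p : P) (l : L), d2 (actL p l) = actM p (d2 l)
  d1_equivariant : ∀ (p : P) (m : M), d1 (actM p m) = mulP p (d1 m)
  pf_add_left : ∀ m m' m'' : M, pf (m + m') m'' = pf m m'' + pf m' m''
  pf_add_right : ∀ m m' m'' : M, pf m (m' + m'') = pf m m' + pf m m''
  pf_smul_left : ∀ (a : k) (m m' : M), pf (a • m) m' = a • pf m m'
  pf_smul_right : ∀ (a : k) (m m' : M), pf m (a • m') = a • pf m m'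
  pl1 : ∀ m₀ m₁ : M, d2 (pf m₀ m₁) = mulM m₀ m₁ - actM (d1 m₁) m₀
  pl2 : ∀ l₀ l₁ : L, pf (d2 l₀) (d2 l₁) = mulL l₀ l₁
  pl3 : ∀ m₀ m₁ m₂ : M, pf m₀ (mulM m₁ m₂) = pf (mulM m₀ m₁) m₂ + actL (d1 m₂) (pf m₀ m₁)
  pl4 : ∀ (m : M) (l : L), pf m (d2 l) + pf (d2 l) m = actL (d1 m) l
  pl5_left : ∀ (p : P) (m₀ m₁ : M), actL p (pf m₀ m₁) = pf (actM p m₀) m₁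
  pl5_right : ∀ (p : P) (m₀ m₁ : M), actL p (pf m₀ m₁) = pf m₀ (actM p m₁)

/-- `(f₂, f₁, f₀)` is a morphism of 2-crossed modules of commutative `k`-algebras. -/
structure IsTwoCrossedModuleHom {L M P L' M' P' : Type*}
    [AddCommGroup L] [Module k L] [AddCommGroup M] [Module k M] [AddCommGroup P] [Module k P]
    [AddCommGroup L'] [Module k L'] [AddCommGroup M'] [Module k M']
    [AddCommGroup P'] [Module k P']
    (mulL : L → L → L) (mulM : M → M → M) (mulP : P → P → P)
    (d2 : L → M) (d1 : M → P) (actL : P → L → L) (actM : P → M → M) (pf : M → M → L)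
    (mulL' : L' → L' → L') (mulM' : M' → M' → M') (mulP' : P' → P' → P')
    (d2' : L' → M') (d1' : M' → P') (actL' : P' → L' → L') (actM' : P' → M' → M')
    (pf' : M' → M' → L')
    (f₂ : L → L') (f₁ : M → M') (f₀ : P → P') : Prop where
  homF2 : IsAlgHomStr k mulL mulL' f₂
  homF1 : IsAlgHomStr k mulM mulM' f₁
  homF0 : IsAlgHomStr k mulP mulP' f₀
  comm_d2 : ∀ l : L, f₁ (d2 l) = d2' (f₂ l)
  comm_d1 : ∀ m : M, f₀ (d1 m) = d1' (f₁ m)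
  comm_actL : ∀ (p : P) (l : L), f₂ (actL p l) = actL' (f₀ p) (f₂ l)
  comm_actM : ∀ (p : P) (m : M), f₁ (actM p m) = actM' (f₀ p) (f₁ m)
  comm_pf : ∀ m m' : M, f₂ (pf m m') = pf' (f₁ m) (f₁ m')

end Defs

/-! Both conditions on `R` serve the same purpose: elements `δ` of `M(R)` commute with each other
on products, `δ (δ' (a b)) = δ a · δ' b = δ' (δ (a b))`, and either hypothesis lets one pass from
products to all of `R` (by testing against `R` when `Ann(R) = 0`, by additivity when `R·R = R`).
Everything else is a direct computation with associativity and commutativity of `R`. -/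

namespace IsCommAlgebraStr

variable {k R : Type*} [CommRing k] [AddCommGroup R] [Module k R] {mulR : R → R → R}
  (hR : IsCommAlgebraStr k mulR)

def lmul : R →ₗ[k] Module.End k R :=
  LinearMap.mk₂ k mulR hR.add_left hR.smul_left hR.add_right hR.smul_right

@[simp]
theorem lmul_apply (r r' : R) : hR.lmul r r' = mulR r r' := rfl

def multiplicationAlgebra : Subalgebra k (Module.End k R) where
  carrier := {δ | ∀ r r' : R, δ (mulR r r') = mulR r (δ r')}
  add_mem' {δ δ'} hδ hδ' r r' := by
    simp only [LinearMap.add_apply, hδ r r', hδ' r r', hR.add_right]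
  zero_mem' r _ := (hR.lmul r).map_zero.symm
  mul_mem' {δ δ'} hδ hδ' r r' := by
    simp only [Module.End.mul_apply, hδ' r r', hδ r (δ' r')]
  algebraMap_mem' a r r' := by
    simp only [Module.algebraMap_end_apply, hR.smul_right]

variable {hR}

theorem map_mul_eq_map_mul {δ : Module.End k R} (hδ : δ ∈ hR.multiplicationAlgebra)
    (r r' : R) : δ (mulR r r') = mulR (δ r) r' := by
  rw [hR.comm r r', hδ, hR.comm]

theorem map_map_mul_comm {δ δ' : Module.End k R} (hδ : δ ∈ hR.multiplicationAlgebra)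
    (hδ' : δ' ∈ hR.multiplicationAlgebra) (a b : R) :
    δ (δ' (mulR a b)) = δ' (δ (mulR a b)) := by
  rw [hδ' a b, map_mul_eq_map_mul hδ, map_mul_eq_map_mul hδ, hδ' (δ a) b]

theorem mul_comm_of_annihilator_eq_zero (hann : ∀ x : R, (∀ r : R, mulR x r = 0) → x = 0)
    {δ δ' : Module.End k R} (hδ : δ ∈ hR.multiplicationAlgebra)
    (hδ' : δ' ∈ hR.multiplicationAlgebra) : δ * δ' = δ' * δ := by
  ext x
  refine sub_eq_zero.mp (hann _ fun r => ?_)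
  have hmul_map : ∀ {ε ε' : Module.End k R}, ε ∈ hR.multiplicationAlgebra →
      ε' ∈ hR.multiplicationAlgebra → mulR (ε (ε' x)) r = ε (ε' (mulR r x)) := by
    intro ε ε' hε hε'
    rw [hR.comm, hε', hε]
  calc mulR ((δ * δ') x - (δ' * δ) x) r = mulR (δ (δ' x)) r - mulR (δ' (δ x)) r :=
        LinearMap.map_sub₂ hR.lmul _ _ r
    _ = δ (δ' (mulR r x)) - δ' (δ (mulR r x)) := by rw [hmul_map hδ hδ', hmul_map hδ' hδ]
    _ = 0 := by rw [map_map_mul_comm hδ hδ', sub_self]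

theorem mul_comm_of_closure_mul_eq_top
    (hgen : ∀ x : R, x ∈ AddSubgroup.closure {y : R | ∃ a b : R, y = mulR a b})
    {δ δ' : Module.End k R} (hδ : δ ∈ hR.multiplicationAlgebra)
    (hδ' : δ' ∈ hR.multiplicationAlgebra) : δ * δ' = δ' * δ := by
  ext x
  induction hgen x using AddSubgroup.closure_induction with
  | mem _ hy =>
    obtain ⟨a, b, rfl⟩ := hy
    exact map_map_mul_comm hδ hδ' a b
  | zero => simp only [map_zero]
  | add _ _ _ _ ha hb => simp only [map_add, ha, hb]
  | neg _ _ ha => simp only [map_neg, ha]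

variable (hR)

theorem lmul_mem (r : R) : hR.lmul r ∈ hR.multiplicationAlgebra := fun a b => by
  simp only [lmul_apply, ← hR.assoc, hR.comm r a]

theorem lmul_mul (r r' : R) : hR.lmul (mulR r r') = hR.lmul r * hR.lmul r' := by
  ext x
  simp only [lmul_apply, Module.End.mul_apply, hR.assoc]

theorem lmul_map {δ : Module.End k R} (hδ : δ ∈ hR.multiplicationAlgebra) (r : R) :
    hR.lmul (δ r) = δ * hR.lmul r := by
  ext x
  simp only [lmul_apply, Module.End.mul_apply, map_mul_eq_map_mul hδ]

end IsCommAlgebraStr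

/-- Let `R` be a (not necessarily unital) commutative `k`-algebra with
`Ann(R) = 0` or `R·R = R`, and let `M(R)` be its multiplication algebra, the set of `k`-linear
maps `δ : R → R` with `δ(r r') = r δ(r')`. Then (i) `M(R)` is a commutative `k`-subalgebra of
the `k`-linear endomorphisms of `R` (in particular closed under composition);
(ii) `μ : R → M(R)`, `μ(r)(r') = r r'`, is a `k`-algebra morphism; (iii) with `M(R)` acting on
`R` by `δ · r = δ(r)`, the triple `(R, M(R), μ)` is a crossed module:
`δ · (r r') = (δ · r) r'`, `μ(δ · r) = δ ∘ μ(r)` and `μ(r) · r' = r r'`. -/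
theorem statement2 {k R : Type*} [CommRing k] [AddCommGroup R] [Module k R]
    (mulR : R → R → R) (hR : IsCommAlgebraStr k mulR)
    (hcond : (∀ x : R, (∀ r : R, mulR x r = 0) → x = 0)
      ∨ (∀ x : R, x ∈ AddSubgroup.closure {y : R | ∃ a b : R, y = mulR a b}))
    (MR : Set (Module.End k R)) (hMR : MR = {δ | ∀ r r' : R, δ (mulR r r') = mulR r (δ r')})
    (μ : R → Module.End k R) (hμ : ∀ r r' : R, μ r r' = mulR r r') :
    (∃ A : Subalgebra k (Module.End k R), (A : Set (Module.End k R)) = MR)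
    ∧ (∀ δ ∈ MR, ∀ δ' ∈ MR, (δ * δ' : Module.End k R) ∈ MR ∧ δ * δ' = δ' * δ)
    ∧ (∀ r : R, μ r ∈ MR)
    ∧ (∀ r r' : R, μ (r + r') = μ r + μ r')
    ∧ (∀ (a : k) (r : R), μ (a • r) = a • μ r)
    ∧ (∀ r r' : R, μ (mulR r r') = μ r * μ r')
    ∧ (∀ δ ∈ MR, ∀ r r' : R, δ (mulR r r') = mulR (δ r) r')
    ∧ (∀ δ ∈ MR, ∀ r : R, μ (δ r) = δ * μ r)
    ∧ (∀ r r' : R, μ r r' = mulR r r') := by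
  subst hMR
  obtain rfl : μ = hR.lmul := funext fun r => LinearMap.ext (hμ r)
  refine ⟨⟨hR.multiplicationAlgebra, rfl⟩, fun δ hδ δ' hδ' => ⟨?_, ?_⟩, hR.lmul_mem, map_add _,
    map_smul _, hR.lmul_mul, fun δ hδ => IsCommAlgebraStr.map_mul_eq_map_mul (hR := hR) hδ,
    fun δ hδ => hR.lmul_map hδ, hμ⟩
  · exact hR.multiplicationAlgebra.mul_mem hδ hδ'
  · rcases hcond with hann | hgen
    · exact hR.mul_comm_of_annihilator_eq_zero hann hδ hδ'
    · exact hR.mul_comm_of_closure_mul_eq_top hgen hδ hδ'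
end

section
/- Let {L, M, P, ∂₂, ∂₁} be a 2-crossed module of commutative k-algebras, and define m·l := {m, ∂₂(l)} for m ∈ M, l ∈ L. Then this operation is k-bilinear and satisfies (m m')·l = m·(m'·l), m·(l l') = (m·l) l', ∂₂(m·l) = m ∂₂(l), and ∂₂(l)·l' = l l' for all m, m' ∈ M and l, l' ∈ L; that is, (L, M, ∂₂) is a crossed module with this action. -/
/-- For a 2-crossed module `{L, M, P, ∂₂, ∂₁}` of commutative `k`-algebras,
the operation `m · l := {m, ∂₂ l}` is a `k`-bilinear `M`-action on `L` satisfying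
`(m m') · l = m · (m' · l)`, `m · (l l') = (m · l) l'`, `∂₂(m · l) = m ∂₂(l)` and
`∂₂(l) · l' = l l'`; that is, `(L, M, ∂₂)` is a crossed module with this action. -/
theorem statement4 {k L M P : Type*} [CommRing k]
    [AddCommGroup L] [Module k L] [AddCommGroup M] [Module k M] [AddCommGroup P] [Module k P]
    (mulL : L → L → L) (mulM : M → M → M) (mulP : P → P → P)
    (d2 : L → M) (d1 : M → P) (actL : P → L → L) (actM : P → M → M) (pf : M → M → L)
    (h : IsTwoCrossedModule k mulL mulM mulP d2 d1 actL actM pf) :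
    IsCrossedModule k mulL mulM d2 (fun m l => pf m (d2 l)) := by
  have actM0 : ∀ m : M, actM 0 m = 0 := by
    intro m
    have := h.actionM.add_left 0 0 m
    rw [add_zero] at this
    exact add_eq_left.mp this.symm
  have actL0 : ∀ l : L, actL 0 l = 0 := by
    intro l
    have := h.actionL.add_left 0 0 l
    rw [add_zero] at this
    exact add_eq_left.mp this.symm
  have pf_sub_left : ∀ x y z : M, pf (x - y) z = pf x z - pf y z := by
    intro x y z
    have := h.pf_add_left (x - y) y z
    rw [sub_add_cancel] at this
    rw [this]; abel
  have d2pf : ∀ (m : M) (l : L), d2 (pf m (d2 l)) = mulM m (d2 l) := by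
    intro m l
    rw [h.pl1, h.d1_d2, actM0, sub_zero]
  refine ⟨⟨h.algL, h.algM, h.homD2, ?_, ?_⟩, ?_⟩
  · constructor
    · intro r r' x; exact h.pf_add_left r r' (d2 x)
    · intro r x y; rw [h.homD2.map_add, h.pf_add_right]
    · intro a r x; exact h.pf_smul_left a r (d2 x)
    · intro a r x; rw [h.homD2.map_smul, h.pf_smul_right]
    · intro r r' x
      have := h.pl3 r r' (d2 x)
      rw [h.d1_d2, actL0, add_zero] at this
      rw [d2pf, ← this]
    · intro r x y
      rw [h.homD2.map_mul]
      have h3 := h.pl3 r (d2 x) (d2 y)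
      rw [h.d1_d2, actL0, add_zero] at h3
      rw [h3, ← h.pl2 (pf r (d2 x)) y, d2pf]
  · intro r c; exact d2pf r c
  · intro c c'; exact h.pl2 c c'
end

section
/- Let {L, M, P, ∂₂, ∂₁} be a 2-crossed module of commutative k-algebras. Then the image Im ∂₂ is an ideal of M stable under the P-action, and the quotient algebra M/Im ∂₂, with the induced P-action and the induced morphism ∂̄₁ : M/Im ∂₂ → P, is a crossed module; in particular the Peiffer identity ∂̄₁(m + Im ∂₂)·(m' + Im ∂₂) = m m' + Im ∂₂ holds for all m, m' ∈ M. -/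
/-- For a 2-crossed module `{L, M, P, ∂₂, ∂₁}` of commutative `k`-algebras,
`Im ∂₂` is an ideal of `M` stable under the `P`-action, and the quotient algebra `M/Im ∂₂`,
with the induced `P`-action and induced morphism to `P`, is a crossed module; in particular
the Peiffer identity holds in the quotient. -/
theorem statement6 {k L M P : Type*} [CommRing k]
    [AddCommGroup L] [Module k L] [AddCommGroup M] [Module k M] [AddCommGroup P] [Module k P]
    (mulL : L → L → L) (mulM : M → M → M) (mulP : P → P → P)
    (d2 : L → M) (d1 : M → P) (actL : P → L → L) (actM : P → M → M) (pf : M → M → L)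
    (h : IsTwoCrossedModule k mulL mulM mulP d2 d1 actL actM pf) :
    (∃ I : AddSubgroup M, (I : Set M) = Set.range d2
      ∧ (∀ m : M, ∀ x ∈ I, mulM m x ∈ I)
      ∧ (∀ p : P, ∀ x ∈ I, actM p x ∈ I))
    ∧ (let N : Submodule k M := Submodule.span k (Set.range d2);
      (N : Set M) = Set.range d2
      ∧ ∃ (mulQ : (M ⧸ N) → (M ⧸ N) → (M ⧸ N)) (dQ : (M ⧸ N) → P)
          (actQ : P → (M ⧸ N) → (M ⧸ N)),
          (∀ m m' : M, mulQ (Submodule.Quotient.mk m) (Submodule.Quotient.mk m')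
              = Submodule.Quotient.mk (mulM m m'))
          ∧ (∀ m : M, dQ (Submodule.Quotient.mk m) = d1 m)
          ∧ (∀ (p : P) (m : M), actQ p (Submodule.Quotient.mk m)
              = Submodule.Quotient.mk (actM p m))
          ∧ IsCrossedModule k mulQ mulP dQ actQ
          ∧ (∀ m m' : M, actQ (dQ (Submodule.Quotient.mk m)) (Submodule.Quotient.mk m')
              = (Submodule.Quotient.mk (mulM m m') : M ⧸ N))) := by
  classical
  have hd2zero : d2 0 = 0 := by
    have := h.homD2.map_smul 0 0
    simpa using this
  have hactM0 : ∀ m : M, actM 0 m = 0 := by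
    intro m
    have := h.actionM.smul_left 0 0 m
    simpa using this
  let S : Submodule k M :=
    { carrier := Set.range d2
      add_mem' := by rintro a b ⟨x, rfl⟩ ⟨y, rfl⟩; exact ⟨x + y, (h.homD2.map_add x y).symm ▸ rfl⟩
      zero_mem' := ⟨0, hd2zero⟩
      smul_mem' := by rintro a m ⟨x, rfl⟩; exact ⟨a • x, h.homD2.map_smul a x⟩ }
  have hmulmem : ∀ (m x : M), x ∈ Set.range d2 → mulM m x ∈ Set.range d2 := by
    rintro m _ ⟨l, rfl⟩
    refine ⟨pf m (d2 l), ?_⟩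
    rw [h.pl1, h.d1_d2, hactM0, sub_zero]
  have hactmem : ∀ (p : P) (x : M), x ∈ Set.range d2 → actM p x ∈ Set.range d2 := by
    rintro p _ ⟨l, rfl⟩
    exact ⟨actL p l, h.d2_equivariant p l⟩
  constructor
  · exact ⟨S.toAddSubgroup, rfl, fun m x hx => hmulmem m x hx, fun p x hx => hactmem p x hx⟩
  · intro N
    have hNS : N = S := Submodule.span_eq S
    have hmemN : ∀ x : M, x ∈ N ↔ x ∈ Set.range d2 := by
      intro x; rw [hNS]; exact Iff.rfl
    -- subtraction lemmas
    have hmsub_l : ∀ a b c : M, mulM (a - b) c = mulM a c - mulM b c := by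
      intro a b c
      have hneg : mulM (-b) c = -(mulM b c) := by
        rw [← neg_one_smul k b, h.algM.smul_left, neg_one_smul]
      rw [sub_eq_add_neg, h.algM.add_left, hneg, ← sub_eq_add_neg]
    have hmsub_r : ∀ a b c : M, mulM a (b - c) = mulM a b - mulM a c := by
      intro a b c
      rw [h.algM.comm, hmsub_l, h.algM.comm b a, h.algM.comm c a]
    have hmulN : ∀ (m x : M), x ∈ N → mulM m x ∈ N := by
      intro m x hx
      exact (hmemN _).mpr (hmulmem m x ((hmemN _).mp hx))
    have hmulN' : ∀ (m x : M), x ∈ N → mulM x m ∈ N := by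
      intro m x hx
      rw [h.algM.comm]
      exact hmulN m x hx
    -- the quotient multiplication
    let mulQ : M ⧸ N → M ⧸ N → M ⧸ N := fun q q' =>
      Quotient.liftOn₂' q q' (fun a b => Submodule.Quotient.mk (mulM a b)) (by
        intro a₁ a₂ b₁ b₂ h1 h2
        have h1' : a₁ - b₁ ∈ N := (Submodule.Quotient.eq N).mp (Quotient.sound' h1)
        have h2' : a₂ - b₂ ∈ N := (Submodule.Quotient.eq N).mp (Quotient.sound' h2)
        refine (Submodule.Quotient.eq N).mpr ?_
        have key : mulM a₁ a₂ - mulM b₁ b₂ = mulM (a₁ - b₁) a₂ + mulM b₁ (a₂ - b₂) := by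
          rw [hmsub_l, hmsub_r]; abel
        rw [key]
        exact N.add_mem (hmulN' a₂ _ h1') (hmulN b₁ _ h2'))
    have hmulQmk : ∀ m m' : M, mulQ (Submodule.Quotient.mk m) (Submodule.Quotient.mk m')
        = Submodule.Quotient.mk (mulM m m') := fun _ _ => rfl
    -- induced morphism to P
    let d1lin : M →ₗ[k] P :=
      { toFun := d1, map_add' := h.homD1.map_add, map_smul' := h.homD1.map_smul }
    have hker : N ≤ LinearMap.ker d1lin := by
      intro x hx
      obtain ⟨l, rfl⟩ := (hmemN x).mp hx
      exact LinearMap.mem_ker.mpr (h.d1_d2 l)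
    let dQl : M ⧸ N →ₗ[k] P := N.liftQ d1lin hker
    let dQ : M ⧸ N → P := fun q => dQl q
    have hdQmk : ∀ m : M, dQ (Submodule.Quotient.mk m) = d1 m := fun m => rfl
    -- induced action
    let actlin : P → (M →ₗ[k] M) := fun p =>
      { toFun := actM p, map_add' := h.actionM.add_right p,
        map_smul' := fun a x => h.actionM.smul_right a p x }
    have hcomap : ∀ p : P, N ≤ N.comap (actlin p) := by
      intro p x hx
      exact (hmemN _).mpr (hactmem p x ((hmemN x).mp hx))
    let actQ : P → (M ⧸ N) → (M ⧸ N) := fun p q => N.mapQ N (actlin p) (hcomap p) q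
    have hactQmk : ∀ (p : P) (m : M), actQ p (Submodule.Quotient.mk m)
        = Submodule.Quotient.mk (actM p m) := fun p m => rfl
    have hsurj := Submodule.Quotient.mk_surjective N
    have hpeiffer : ∀ m m' : M, actQ (dQ (Submodule.Quotient.mk m)) (Submodule.Quotient.mk m')
        = (Submodule.Quotient.mk (mulM m m') : M ⧸ N) := by
      intro m m'
      rw [hdQmk, hactQmk]
      refine (Submodule.Quotient.eq N).mpr ?_
      have key : actM (d1 m) m' - mulM m m' = -(d2 (pf m' m)) := by
        rw [h.pl1, h.algM.comm m' m]; abel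
      rw [key]
      exact N.neg_mem ((hmemN _).mpr ⟨pf m' m, rfl⟩)
    refine ⟨?_, mulQ, dQ, actQ, hmulQmk, hdQmk, hactQmk, ?_, hpeiffer⟩
    · rw [hNS]; rfl
    refine
      { algC := ?_, algR := h.algP, hom := ?_, action := ?_, equivariant := ?_,
        peiffer := ?_ }
    · constructor
      · intro x y
        obtain ⟨a, rfl⟩ := hsurj x; obtain ⟨b, rfl⟩ := hsurj y
        rw [hmulQmk, hmulQmk, h.algM.comm]
      · intro x y z
        obtain ⟨a, rfl⟩ := hsurj x; obtain ⟨b, rfl⟩ := hsurj y; obtain ⟨c, rfl⟩ := hsurj z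
        rw [hmulQmk, hmulQmk, hmulQmk, hmulQmk, h.algM.assoc]
      · intro x y z
        obtain ⟨a, rfl⟩ := hsurj x; obtain ⟨b, rfl⟩ := hsurj y; obtain ⟨c, rfl⟩ := hsurj z
        rw [← Submodule.Quotient.mk_add, hmulQmk, hmulQmk, hmulQmk, h.algM.add_left,
          Submodule.Quotient.mk_add]
      · intro x y z
        obtain ⟨a, rfl⟩ := hsurj x; obtain ⟨b, rfl⟩ := hsurj y; obtain ⟨c, rfl⟩ := hsurj z
        rw [← Submodule.Quotient.mk_add, hmulQmk, hmulQmk, hmulQmk, h.algM.add_right,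
          Submodule.Quotient.mk_add]
      · intro a x y
        obtain ⟨b, rfl⟩ := hsurj x; obtain ⟨c, rfl⟩ := hsurj y
        rw [← Submodule.Quotient.mk_smul, hmulQmk, hmulQmk, h.algM.smul_left,
          Submodule.Quotient.mk_smul]
      · intro a x y
        obtain ⟨b, rfl⟩ := hsurj x; obtain ⟨c, rfl⟩ := hsurj y
        rw [← Submodule.Quotient.mk_smul, hmulQmk, hmulQmk, h.algM.smul_right,
          Submodule.Quotient.mk_smul]
    · constructor
      · intro x y
        obtain ⟨a, rfl⟩ := hsurj x; obtain ⟨b, rfl⟩ := hsurj y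
        rw [← Submodule.Quotient.mk_add, hdQmk, hdQmk, hdQmk, h.homD1.map_add]
      · intro a x
        obtain ⟨b, rfl⟩ := hsurj x
        rw [← Submodule.Quotient.mk_smul, hdQmk, hdQmk, h.homD1.map_smul]
      · intro x y
        obtain ⟨a, rfl⟩ := hsurj x; obtain ⟨b, rfl⟩ := hsurj y
        rw [hmulQmk, hdQmk, hdQmk, hdQmk, h.homD1.map_mul]
    · constructor
      · intro r r' x
        obtain ⟨a, rfl⟩ := hsurj x
        rw [hactQmk, hactQmk, hactQmk, h.actionM.add_left, Submodule.Quotient.mk_add]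
      · intro r x y
        obtain ⟨a, rfl⟩ := hsurj x; obtain ⟨b, rfl⟩ := hsurj y
        rw [← Submodule.Quotient.mk_add, hactQmk, hactQmk, hactQmk, h.actionM.add_right,
          Submodule.Quotient.mk_add]
      · intro a r x
        obtain ⟨b, rfl⟩ := hsurj x
        rw [hactQmk, hactQmk, h.actionM.smul_left, Submodule.Quotient.mk_smul]
      · intro a r x
        obtain ⟨b, rfl⟩ := hsurj x
        rw [← Submodule.Quotient.mk_smul, hactQmk, hactQmk, h.actionM.smul_right,
          Submodule.Quotient.mk_smul]
      · intro r r' x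
        obtain ⟨a, rfl⟩ := hsurj x
        rw [hactQmk, hactQmk, hactQmk, h.actionM.mul_act]
      · intro r x y
        obtain ⟨a, rfl⟩ := hsurj x; obtain ⟨b, rfl⟩ := hsurj y
        rw [hmulQmk, hactQmk, hactQmk, hmulQmk, h.actionM.act_mul]
    · intro r c
      obtain ⟨a, rfl⟩ := hsurj c
      rw [hactQmk, hdQmk, hdQmk, h.d1_equivariant]
    · intro c c'
      obtain ⟨a, rfl⟩ := hsurj c; obtain ⟨b, rfl⟩ := hsurj c'
      rw [hmulQmk]
      exact hpeiffer a b
end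

section
/- Let {C₂, C₁, R, ∂₂, ∂₁} be a 2-crossed module of commutative k-algebras and φ : S → R an injective morphism of commutative k-algebras. Set φ*(C₁) = {(c₁, s) ∈ C₁ × S : ∂₁(c₁) = φ(s)}, a subalgebra of the product C₁ × S, with S acting on φ*(C₁) by s·(c₁, s') = (φ(s)·c₁, s s') and on C₂ by s·c₂ = φ(s)·c₂; define ∂₂* : C₂ → φ*(C₁) by ∂₂*(c₂) = (∂₂(c₂), 0), ∂₁* : φ*(C₁) → S by ∂₁*(c₁, s) = s, and the Peiffer lifting by {(c₁, s), (c₁', s')} := {c₁, c₁'}. Then {C₂, φ*(C₁), S, ∂₂*, ∂₁*} is a 2-crossed module (the pullback 2-crossed module of {C₂, C₁, R, ∂₂, ∂₁} along φ). -/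
/-- The pullback `{(x, y) | f x = g y}` of two `k`-linear maps, as a `k`-submodule of the
product. -/
def eqLocusSubmodule (k : Type*) [CommRing k] {X Y Z : Type*}
    [AddCommGroup X] [Module k X] [AddCommGroup Y] [Module k Y] [AddCommGroup Z] [Module k Z]
    (f : X → Z) (g : Y → Z)
    (hfa : ∀ x y, f (x + y) = f x + f y) (hfs : ∀ (a : k) (x : X), f (a • x) = a • f x)
    (hga : ∀ x y, g (x + y) = g x + g y) (hgs : ∀ (a : k) (y : Y), g (a • y) = a • g y) :
    Submodule k (X × Y) where
  carrier := {p | f p.1 = g p.2}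
  add_mem' := by
    intro a b (ha : f a.1 = g a.2) (hb : f b.1 = g b.2)
    show f (a.1 + b.1) = g (a.2 + b.2)
    rw [hfa, hga, ha, hb]
  zero_mem' := by
    have h0f : f 0 = 0 := by have := hfs 0 0; rwa [zero_smul, zero_smul] at this
    have h0g : g 0 = 0 := by have := hgs 0 0; rwa [zero_smul, zero_smul] at this
    show f (0 : X) = g (0 : Y)
    rw [h0f, h0g]
  smul_mem' := by
    intro a p (hp : f p.1 = g p.2)
    show f (a • p.1) = g (a • p.2)
    rw [hfs, hgs, hp]

/-- Given a 2-crossed module `{C₂, C₁, R, ∂₂, ∂₁}` of commutative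
`k`-algebras and an injective `k`-algebra morphism `φ : S → R`, the pullback
`φ*(C₁) = {(c₁, s) | ∂₁ c₁ = φ s}` (a subalgebra of `C₁ × S`), together with
`∂₂*(c₂) = (∂₂ c₂, 0)`, `∂₁*(c₁, s) = s`, the `S`-actions `s · (c₁, s') = (φ(s) · c₁, s s')`
and `s · c₂ = φ(s) · c₂`, and Peiffer lifting `{(c₁, s), (c₁', s')} = {c₁, c₁'}`, yields the
pullback 2-crossed module `{C₂, φ*(C₁), S, ∂₂*, ∂₁*}`. -/
theorem statement8 {k C₂ C₁ R S : Type*} [CommRing k]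
    [AddCommGroup C₂] [Module k C₂] [AddCommGroup C₁] [Module k C₁]
    [AddCommGroup R] [Module k R] [AddCommGroup S] [Module k S]
    (mulC2 : C₂ → C₂ → C₂) (mulC1 : C₁ → C₁ → C₁) (mulR : R → R → R) (mulS : S → S → S)
    (d2 : C₂ → C₁) (d1 : C₁ → R) (actC2 : R → C₂ → C₂) (actC1 : R → C₁ → C₁)
    (pf : C₁ → C₁ → C₂)
    (h : IsTwoCrossedModule k mulC2 mulC1 mulR d2 d1 actC2 actC1 pf)
    (hS : IsCommAlgebraStr k mulS)
    (φ : S → R) (hφ : IsAlgHomStr k mulS mulR φ) (hinj : Function.Injective φ) :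
    let A := ↥(eqLocusSubmodule k d1 φ h.homD1.map_add h.homD1.map_smul
      hφ.map_add hφ.map_smul)
    ∃ (mulA : A → A → A) (d2s : C₂ → A) (d1s : A → S) (actA : S → A → A)
      (actC2S : S → C₂ → C₂) (pfA : A → A → C₂),
      (∀ x y : A, ((mulA x y : C₁ × S))
          = (mulC1 (x : C₁ × S).1 (y : C₁ × S).1, mulS (x : C₁ × S).2 (y : C₁ × S).2))
      ∧ (∀ c₂ : C₂, ((d2s c₂ : C₁ × S)) = (d2 c₂, 0))
      ∧ (∀ x : A, d1s x = (x : C₁ × S).2)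
      ∧ (∀ (s : S) (x : A), ((actA s x : C₁ × S))
          = (actC1 (φ s) (x : C₁ × S).1, mulS s (x : C₁ × S).2))
      ∧ (∀ (s : S) (c₂ : C₂), actC2S s c₂ = actC2 (φ s) c₂)
      ∧ (∀ x y : A, pfA x y = pf (x : C₁ × S).1 (y : C₁ × S).1)
      ∧ IsTwoCrossedModule k mulC2 mulA mulS d2s d1s actC2S actA pfA := by
  intro A
  have hmem : ∀ x : A, d1 (x : C₁ × S).1 = φ (x : C₁ × S).2 := fun x => x.2
  have hφ0 : φ 0 = 0 := by
    have := hφ.map_smul 0 0; simpa using this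
  have hmulS0 : ∀ s, mulS s 0 = 0 := by
    intro s
    have h0 := hS.add_right s 0 0
    rw [add_zero] at h0
    exact (left_eq_add.mp h0)
  have hcoe_add : ∀ x y : A, ((x + y : A) : C₁ × S) = (x : C₁ × S) + (y : C₁ × S) :=
    fun x y => rfl
  have hcoe_smul : ∀ (a : k) (x : A), ((a • x : A) : C₁ × S) = a • (x : C₁ × S) :=
    fun a x => rfl
  refine ⟨fun x y => ⟨(mulC1 (x : C₁ × S).1 (y : C₁ × S).1, mulS (x : C₁ × S).2 (y : C₁ × S).2), ?_⟩,
    fun c => ⟨(d2 c, 0), ?_⟩,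
    fun x => (x : C₁ × S).2,
    fun s x => ⟨(actC1 (φ s) (x : C₁ × S).1, mulS s (x : C₁ × S).2), ?_⟩,
    fun s c => actC2 (φ s) c,
    fun x y => pf (x : C₁ × S).1 (y : C₁ × S).1,
    fun x y => rfl, fun c => rfl, fun x => rfl, fun s x => rfl, fun s c => rfl,
    fun x y => rfl, ?_⟩
  · show d1 _ = φ _
    rw [h.homD1.map_mul, hφ.map_mul, hmem x, hmem y]
  · show d1 (d2 c) = φ 0
    rw [h.d1_d2, hφ0]
  · show d1 _ = φ _
    rw [h.d1_equivariant, hmem x, ← hφ.map_mul]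
  · constructor
    case algL => exact h.algL
    case algP => exact hS
    case algM =>
      constructor
      · exact fun x y => Subtype.ext (Prod.ext (h.algM.comm _ _) (hS.comm _ _))
      · exact fun x y z => Subtype.ext (Prod.ext (h.algM.assoc _ _ _) (hS.assoc _ _ _))
      · exact fun x y z => Subtype.ext (Prod.ext (h.algM.add_left _ _ _) (hS.add_left _ _ _))
      · exact fun x y z => Subtype.ext (Prod.ext (h.algM.add_right _ _ _) (hS.add_right _ _ _))
      · exact fun a x y => Subtype.ext (Prod.ext (h.algM.smul_left _ _ _) (hS.smul_left _ _ _))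
      · exact fun a x y => Subtype.ext (Prod.ext (h.algM.smul_right _ _ _) (hS.smul_right _ _ _))
    case homD2 =>
      constructor
      · exact fun x y => Subtype.ext (Prod.ext (h.homD2.map_add _ _) (zero_add 0).symm)
      · exact fun a x => Subtype.ext (Prod.ext (h.homD2.map_smul _ _) (smul_zero a).symm)
      · exact fun x y => Subtype.ext (Prod.ext (h.homD2.map_mul _ _) (hmulS0 0).symm)
    case homD1 => exact ⟨fun x y => rfl, fun a x => rfl, fun x y => rfl⟩
    case d1_d2 => exact fun l => rfl
    case actionL =>
      constructor
      · intro r r' x; rw [hφ.map_add]; exact h.actionL.add_left _ _ _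
      · exact fun r x y => h.actionL.add_right _ _ _
      · intro a r x; rw [hφ.map_smul]; exact h.actionL.smul_left _ _ _
      · exact fun a r x => h.actionL.smul_right _ _ _
      · intro r r' x; rw [hφ.map_mul]; exact h.actionL.mul_act _ _ _
      · exact fun r x y => h.actionL.act_mul _ _ _
    case actionM =>
      constructor
      · intro s s' x
        refine Subtype.ext (Prod.ext ?_ (hS.add_left _ _ _))
        show actC1 (φ (s + s')) _ = _
        rw [hφ.map_add]; exact h.actionM.add_left _ _ _
      · exact fun s x y => Subtype.ext (Prod.ext (h.actionM.add_right _ _ _) (hS.add_right _ _ _))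
      · intro a s x
        refine Subtype.ext (Prod.ext ?_ (hS.smul_left _ _ _))
        show actC1 (φ (a • s)) _ = _
        rw [hφ.map_smul]; exact h.actionM.smul_left _ _ _
      · exact fun a s x => Subtype.ext (Prod.ext (h.actionM.smul_right _ _ _) (hS.smul_right _ _ _))
      · intro s s' x
        refine Subtype.ext (Prod.ext ?_ (hS.assoc _ _ _))
        show actC1 (φ (mulS s s')) _ = _
        rw [hφ.map_mul]; exact h.actionM.mul_act _ _ _
      · exact fun s x y => Subtype.ext (Prod.ext (h.actionM.act_mul _ _ _) (hS.assoc _ _ _).symm)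
    case d2_equivariant =>
      exact fun s l => Subtype.ext (Prod.ext (h.d2_equivariant _ _) (hmulS0 s).symm)
    case d1_equivariant => exact fun s x => rfl
    case pf_add_left => exact fun x y z => h.pf_add_left _ _ _
    case pf_add_right => exact fun x y z => h.pf_add_right _ _ _
    case pf_smul_left => exact fun a x y => h.pf_smul_left _ _ _
    case pf_smul_right => exact fun a x y => h.pf_smul_right _ _ _
    case pl1 =>
      intro x y
      refine Subtype.ext (Prod.ext ?_ ?_)
      · show d2 (pf _ _) = mulC1 _ _ - actC1 (φ _) _
        rw [h.pl1, hmem y]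
      · show (0 : S) = mulS _ _ - mulS _ _
        rw [hS.comm, sub_self]
    case pl2 => exact fun l₀ l₁ => h.pl2 _ _
    case pl3 =>
      intro x y z
      show pf _ (mulC1 _ _) = pf (mulC1 _ _) _ + actC2 (φ _) (pf _ _)
      rw [← hmem z]; exact h.pl3 _ _ _
    case pl4 =>
      intro m l
      show pf _ (d2 l) + pf (d2 l) _ = actC2 (φ _) l
      rw [← hmem m]; exact h.pl4 _ _
    case pl5_left => exact fun s x y => h.pl5_left _ _ _
    case pl5_right => exact fun s x y => h.pl5_right _ _ _
end

section
/- Let {C₂, C₁, R, ∂₂, ∂₁} be a 2-crossed module of commutative k-algebras, φ : S → R an injective morphism of commutative k-algebras, and {C₂, φ*(C₁), S, ∂₂*, ∂₁*} the pullback 2-crossed module along φ, with φ' : φ*(C₁) → C₁ given by φ'(c₁, s) = c₁. Then for every 2-crossed module {B₂, B₁, S, ∂₂', ∂₁'} and every morphism of 2-crossed modules (f₂, f₁, φ) : {B₂, B₁, S, ∂₂', ∂₁'} → {C₂, C₁, R, ∂₂, ∂₁}, there exists a unique morphism of 2-crossed modules (g₂, g₁, id_S) : {B₂, B₁, S, ∂₂',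 ∂₁'} → {C₂, φ*(C₁), S, ∂₂*, ∂₁*} such that g₂ = f₂ and φ' ∘ g₁ = f₁; explicitly, g₁(b₁) = (f₁(b₁), ∂₁'(b₁)). -/
/-- Universal property of the pullback 2-crossed module: given a 2-crossed
module `{C₂, C₁, R, ∂₂, ∂₁}`, an injective `k`-algebra morphism `φ : S → R`, the pullback
2-crossed module `{C₂, φ*(C₁), S, ∂₂*, ∂₁*}` with projection `φ'(c₁, s) = c₁`, any 2-crossed
module `{B₂, B₁, S, ∂₂', ∂₁'}` and any morphism `(f₂, f₁, φ)` of 2-crossed modules, there is a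
unique morphism `(g₂, g₁, id_S)` with `g₂ = f₂` and `φ' ∘ g₁ = f₁`; explicitly
`g₁(b₁) = (f₁ b₁, ∂₁' b₁)`. -/
theorem statement9 {k C₂ C₁ R S B₂ B₁ : Type*} [CommRing k]
    [AddCommGroup C₂] [Module k C₂] [AddCommGroup C₁] [Module k C₁]
    [AddCommGroup R] [Module k R] [AddCommGroup S] [Module k S]
    [AddCommGroup B₂] [Module k B₂] [AddCommGroup B₁] [Module k B₁]
    (mulC2 : C₂ → C₂ → C₂) (mulC1 : C₁ → C₁ → C₁) (mulR : R → R → R) (mulS : S → S → S)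
    (d2 : C₂ → C₁) (d1 : C₁ → R) (actC2 : R → C₂ → C₂) (actC1 : R → C₁ → C₁)
    (pf : C₁ → C₁ → C₂)
    (h : IsTwoCrossedModule k mulC2 mulC1 mulR d2 d1 actC2 actC1 pf)
    (hS : IsCommAlgebraStr k mulS)
    (φ : S → R) (hφ : IsAlgHomStr k mulS mulR φ) (hinj : Function.Injective φ)
    (mulB2 : B₂ → B₂ → B₂) (mulB1 : B₁ → B₁ → B₁)
    (d2B : B₂ → B₁) (d1B : B₁ → S) (actB2 : S → B₂ → B₂) (actB1 : S → B₁ → B₁)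
    (pfB : B₁ → B₁ → B₂)
    (hB : IsTwoCrossedModule k mulB2 mulB1 mulS d2B d1B actB2 actB1 pfB)
    (f₂ : B₂ → C₂) (f₁ : B₁ → C₁)
    (hf : IsTwoCrossedModuleHom k mulB2 mulB1 mulS d2B d1B actB2 actB1 pfB
      mulC2 mulC1 mulR d2 d1 actC2 actC1 pf f₂ f₁ φ) :
    let A := ↥(eqLocusSubmodule k d1 φ h.homD1.map_add h.homD1.map_smul
      hφ.map_add hφ.map_smul)
    ∀ (mulA : A → A → A) (d2s : C₂ → A) (d1s : A → S) (actA : S → A → A)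
      (actC2S : S → C₂ → C₂) (pfA : A → A → C₂),
      (∀ x y : A, ((mulA x y : C₁ × S))
          = (mulC1 (x : C₁ × S).1 (y : C₁ × S).1, mulS (x : C₁ × S).2 (y : C₁ × S).2)) →
      (∀ c₂ : C₂, ((d2s c₂ : C₁ × S)) = (d2 c₂, 0)) →
      (∀ x : A, d1s x = (x : C₁ × S).2) →
      (∀ (s : S) (x : A), ((actA s x : C₁ × S))
          = (actC1 (φ s) (x : C₁ × S).1, mulS s (x : C₁ × S).2)) →
      (∀ (s : S) (c₂ : C₂), actC2S s c₂ = actC2 (φ s) c₂) →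
      (∀ x y : A, pfA x y = pf (x : C₁ × S).1 (y : C₁ × S).1) →
      IsTwoCrossedModule k mulC2 mulA mulS d2s d1s actC2S actA pfA →
      ((∃! g : (B₂ → C₂) × (B₁ → A),
          IsTwoCrossedModuleHom k mulB2 mulB1 mulS d2B d1B actB2 actB1 pfB
            mulC2 mulA mulS d2s d1s actC2S actA pfA g.1 g.2 id
          ∧ g.1 = f₂ ∧ ∀ b₁ : B₁, ((g.2 b₁ : C₁ × S)).1 = f₁ b₁)
        ∧ ∀ g : (B₂ → C₂) × (B₁ → A),
            (IsTwoCrossedModuleHom k mulB2 mulB1 mulS d2B d1B actB2 actB1 pfB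
              mulC2 mulA mulS d2s d1s actC2S actA pfA g.1 g.2 id
            ∧ g.1 = f₂ ∧ ∀ b₁ : B₁, ((g.2 b₁ : C₁ × S)).1 = f₁ b₁) →
            ∀ b₁ : B₁, ((g.2 b₁ : C₁ × S)) = (f₁ b₁, d1B b₁)) := by
  intro A mulA d2s d1s actA actC2S pfA hmulA hd2s hd1s hactA hactC2S hpfA _hTCM
  have mem : ∀ b₁ : B₁, (f₁ b₁, d1B b₁) ∈ eqLocusSubmodule k d1 φ h.homD1.map_add
      h.homD1.map_smul hφ.map_add hφ.map_smul := fun b₁ => (hf.comm_d1 b₁).symm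
  set g₁ : B₁ → A := fun b₁ => ⟨(f₁ b₁, d1B b₁), mem b₁⟩ with hg₁
  have hHom : IsTwoCrossedModuleHom k mulB2 mulB1 mulS d2B d1B actB2 actB1 pfB
      mulC2 mulA mulS d2s d1s actC2S actA pfA f₂ g₁ id := by
    constructor
    · exact hf.homF2
    · constructor
      · intro x y; apply Subtype.ext
        show (f₁ (x + y), d1B (x + y)) = ((g₁ x : C₁ × S) + (g₁ y : C₁ × S))
        rw [hf.homF1.map_add, hB.homD1.map_add]; rfl
      · intro a x; apply Subtype.ext
        show (f₁ (a • x), d1B (a • x)) = a • (g₁ x : C₁ × S)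
        rw [hf.homF1.map_smul, hB.homD1.map_smul]; rfl
      · intro x y; apply Subtype.ext
        rw [hmulA]
        show (f₁ (mulB1 x y), d1B (mulB1 x y)) = _
        rw [hf.homF1.map_mul, hB.homD1.map_mul]
    · exact ⟨fun _ _ => rfl, fun _ _ => rfl, fun _ _ => rfl⟩
    · intro l; apply Subtype.ext
      rw [hd2s]
      show (f₁ (d2B l), d1B (d2B l)) = _
      rw [hf.comm_d2, hB.d1_d2]
    · intro m; rw [hd1s]; rfl
    · intro s l; rw [hactC2S]; exact hf.comm_actL s l
    · intro s m; apply Subtype.ext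
      rw [hactA]
      show (f₁ (actB1 s m), d1B (actB1 s m)) = _
      rw [hf.comm_actM, hB.d1_equivariant]; rfl
    · intro m m'; rw [hpfA]; exact hf.comm_pf m m'
  have key : ∀ g : (B₂ → C₂) × (B₁ → A),
      (IsTwoCrossedModuleHom k mulB2 mulB1 mulS d2B d1B actB2 actB1 pfB
        mulC2 mulA mulS d2s d1s actC2S actA pfA g.1 g.2 id
      ∧ g.1 = f₂ ∧ ∀ b₁ : B₁, ((g.2 b₁ : C₁ × S)).1 = f₁ b₁) →
      ∀ b₁ : B₁, ((g.2 b₁ : C₁ × S)) = (f₁ b₁, d1B b₁) := by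
    rintro ⟨gf₂, gf₁⟩ ⟨hg, _hg2, hg1⟩ b₁
    have h2 : ((gf₁ b₁ : C₁ × S)).2 = d1B b₁ := by
      have h3 := hg.comm_d1 b₁
      rw [hd1s] at h3; exact h3.symm
    exact Prod.ext (hg1 b₁) h2
  refine ⟨⟨(f₂, g₁), ⟨hHom, rfl, fun b₁ => rfl⟩, ?_⟩, key⟩
  rintro ⟨gf₂, gf₁⟩ hg
  have hu := key _ hg
  refine Prod.ext hg.2.1 (funext fun b₁ => Subtype.ext ?_)
  exact hu b₁
end

section
/- Let {D₂, D₁, S, ∂₂, ∂₁} be a 2-crossed module of commutative k-algebras, K an ideal of S, φ : S → S/K the quotient map, and {D₂/KD₂, D₁/KD₁, S/K, ∂₂*, ∂₁*} the quotient 2-crossed module, with quotient maps φ'' : D₂ → D₂/KD₂ and φ' : D₁ → D₁/KD₁, so that (φ'', φ', φ) is a morphism of 2-crossed modules. Then for every 2-crossed module {B₂, B₁, S/K, ∂₂', ∂₁'} and every morphism of 2-crossed modules (f₂, f₁, φ) : {D₂, D₁, S, ∂₂, ∂₁} → {B₂, B₁, S/K, ∂₂', ∂₁'}, there exists a unique morphism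 of 2-crossed modules (g₂, g₁, id_{S/K}) : {D₂/KD₂, D₁/KD₁, S/K, ∂₂*, ∂₁*} → {B₂, B₁, S/K, ∂₂', ∂₁'} with g₂ ∘ φ'' = f₂ and g₁ ∘ φ' = f₁. -/
/-- Universal property of the quotient 2-crossed module
`{D₂/KD₂, D₁/KD₁, S/K, ∂₂*, ∂₁*}`: for every 2-crossed module `{B₂, B₁, S/K, ∂₂', ∂₁'}` and
every morphism of 2-crossed modules `(f₂, f₁, φ)` (where `φ : S → S/K` is the quotient map),
there is a unique morphism `(g₂, g₁, id)` from the quotient 2-crossed module with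
`g₂ ∘ φ'' = f₂` and `g₁ ∘ φ' = f₁`. -/
theorem statement14 {k D₂ D₁ S B₂ B₁ : Type*} [CommRing k]
    [AddCommGroup D₂] [Module k D₂] [AddCommGroup D₁] [Module k D₁]
    [AddCommGroup S] [Module k S]
    [AddCommGroup B₂] [Module k B₂] [AddCommGroup B₁] [Module k B₁]
    (mulD2 : D₂ → D₂ → D₂) (mulD1 : D₁ → D₁ → D₁) (mulS : S → S → S)
    (d2 : D₂ → D₁) (d1 : D₁ → S) (act2 : S → D₂ → D₂) (act1 : S → D₁ → D₁)
    (pf : D₁ → D₁ → D₂)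
    (h : IsTwoCrossedModule k mulD2 mulD1 mulS d2 d1 act2 act1 pf)
    (K : Submodule k S) (hK : ∀ x ∈ K, ∀ s : S, mulS x s ∈ K) :
    let KD2 : Submodule k D₂ := Submodule.span k {x : D₂ | ∃ s ∈ K, ∃ d : D₂, x = act2 s d}
    let KD1 : Submodule k D₁ := Submodule.span k {x : D₁ | ∃ s ∈ K, ∃ d : D₁, x = act1 s d}
    ∀ (mulQS : (S ⧸ K) → (S ⧸ K) → (S ⧸ K))
      (mulQ2 : (D₂ ⧸ KD2) → (D₂ ⧸ KD2) → (D₂ ⧸ KD2))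
      (mulQ1 : (D₁ ⧸ KD1) → (D₁ ⧸ KD1) → (D₁ ⧸ KD1))
      (dQ2 : (D₂ ⧸ KD2) → (D₁ ⧸ KD1)) (dQ1 : (D₁ ⧸ KD1) → (S ⧸ K))
      (actQ2 : (S ⧸ K) → (D₂ ⧸ KD2) → (D₂ ⧸ KD2))
      (actQ1 : (S ⧸ K) → (D₁ ⧸ KD1) → (D₁ ⧸ KD1))
      (pfQ : (D₁ ⧸ KD1) → (D₁ ⧸ KD1) → (D₂ ⧸ KD2)),
      (∀ a b : S, mulQS (Submodule.Quotient.mk a) (Submodule.Quotient.mk b)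
          = Submodule.Quotient.mk (mulS a b)) →
      (∀ a b : D₂, mulQ2 (Submodule.Quotient.mk a) (Submodule.Quotient.mk b)
          = Submodule.Quotient.mk (mulD2 a b)) →
      (∀ a b : D₁, mulQ1 (Submodule.Quotient.mk a) (Submodule.Quotient.mk b)
          = Submodule.Quotient.mk (mulD1 a b)) →
      (∀ a : D₂, dQ2 (Submodule.Quotient.mk a) = Submodule.Quotient.mk (d2 a)) →
      (∀ a : D₁, dQ1 (Submodule.Quotient.mk a) = Submodule.Quotient.mk (d1 a)) →
      (∀ (s : S) (a : D₂), actQ2 (Submodule.Quotient.mk s) (Submodule.Quotient.mk a)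
          = Submodule.Quotient.mk (act2 s a)) →
      (∀ (s : S) (a : D₁), actQ1 (Submodule.Quotient.mk s) (Submodule.Quotient.mk a)
          = Submodule.Quotient.mk (act1 s a)) →
      (∀ a b : D₁, pfQ (Submodule.Quotient.mk a) (Submodule.Quotient.mk b)
          = Submodule.Quotient.mk (pf a b)) →
      IsTwoCrossedModule k mulQ2 mulQ1 mulQS dQ2 dQ1 actQ2 actQ1 pfQ →
      ∀ (mulB2 : B₂ → B₂ → B₂) (mulB1 : B₁ → B₁ → B₁)
        (d2B : B₂ → B₁) (d1B : B₁ → S ⧸ K)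
        (actB2 : (S ⧸ K) → B₂ → B₂) (actB1 : (S ⧸ K) → B₁ → B₁)
        (pfB : B₁ → B₁ → B₂),
        IsTwoCrossedModule k mulB2 mulB1 mulQS d2B d1B actB2 actB1 pfB →
        ∀ (f₂ : D₂ → B₂) (f₁ : D₁ → B₁),
          IsTwoCrossedModuleHom k mulD2 mulD1 mulS d2 d1 act2 act1 pf
            mulB2 mulB1 mulQS d2B d1B actB2 actB1 pfB f₂ f₁
            (Submodule.Quotient.mk : S → S ⧸ K) →
          ∃! g : ((D₂ ⧸ KD2) → B₂) × ((D₁ ⧸ KD1) → B₁),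
            IsTwoCrossedModuleHom k mulQ2 mulQ1 mulQS dQ2 dQ1 actQ2 actQ1 pfQ
              mulB2 mulB1 mulQS d2B d1B actB2 actB1 pfB g.1 g.2 id
            ∧ (∀ d : D₂, g.1 (Submodule.Quotient.mk d) = f₂ d)
            ∧ (∀ d : D₁, g.2 (Submodule.Quotient.mk d) = f₁ d) := by
  intro KD2 KD1 mulQS mulQ2 mulQ1 dQ2 dQ1 actQ2 actQ1 pfQ
    hmulQS hmulQ2 hmulQ1 hdQ2 hdQ1 hactQ2 hactQ1 hpfQ hQ
    mulB2 mulB1 d2B d1B actB2 actB1 pfB hB f₂ f₁ hf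
  have act0_2 : ∀ x : B₂, actB2 0 x = 0 := fun x => by
    have := hB.actionL.smul_left 0 0 x; simpa using this
  have act0_1 : ∀ x : B₁, actB1 0 x = 0 := fun x => by
    have := hB.actionM.smul_left 0 0 x; simpa using this
  let F₂ : D₂ →ₗ[k] B₂ := ⟨⟨f₂, hf.homF2.map_add⟩, hf.homF2.map_smul⟩
  let F₁ : D₁ →ₗ[k] B₁ := ⟨⟨f₁, hf.homF1.map_add⟩, hf.homF1.map_smul⟩
  have hker2 : KD2 ≤ LinearMap.ker F₂ := by
    rw [Submodule.span_le]
    rintro x ⟨s, hs, d, rfl⟩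
    simp only [SetLike.mem_coe, LinearMap.mem_ker]
    show f₂ (act2 s d) = 0
    rw [hf.comm_actL, (Submodule.Quotient.mk_eq_zero K).2 hs]
    exact act0_2 _
  have hker1 : KD1 ≤ LinearMap.ker F₁ := by
    rw [Submodule.span_le]
    rintro x ⟨s, hs, d, rfl⟩
    simp only [SetLike.mem_coe, LinearMap.mem_ker]
    show f₁ (act1 s d) = 0
    rw [hf.comm_actM, (Submodule.Quotient.mk_eq_zero K).2 hs]
    exact act0_1 _
  let g₂ : D₂ ⧸ KD2 →ₗ[k] B₂ := Submodule.liftQ KD2 F₂ hker2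
  let g₁ : D₁ ⧸ KD1 →ₗ[k] B₁ := Submodule.liftQ KD1 F₁ hker1
  have g₂mk : ∀ d : D₂, g₂ (Submodule.Quotient.mk d) = f₂ d := fun d => rfl
  have g₁mk : ∀ d : D₁, g₁ (Submodule.Quotient.mk d) = f₁ d := fun d => rfl
  refine ⟨(⇑g₂, ⇑g₁), ⟨?_, g₂mk, g₁mk⟩, ?_⟩
  · refine
      { homF2 := ⟨fun x y => g₂.map_add x y, fun a x => g₂.map_smul a x, ?_⟩
        homF1 := ⟨fun x y => g₁.map_add x y, fun a x => g₁.map_smul a x, ?_⟩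
        homF0 := ⟨fun _ _ => rfl, fun _ _ => rfl, fun _ _ => rfl⟩
        comm_d2 := ?_
        comm_d1 := ?_
        comm_actL := ?_
        comm_actM := ?_
        comm_pf := ?_ }
    · intro x y
      obtain ⟨a, rfl⟩ := Submodule.Quotient.mk_surjective _ x
      obtain ⟨b, rfl⟩ := Submodule.Quotient.mk_surjective _ y
      dsimp only
      rw [hmulQ2, g₂mk, g₂mk, g₂mk, hf.homF2.map_mul]
    · intro x y
      obtain ⟨a, rfl⟩ := Submodule.Quotient.mk_surjective _ x
      obtain ⟨b, rfl⟩ := Submodule.Quotient.mk_surjective _ y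
      dsimp only
      rw [hmulQ1, g₁mk, g₁mk, g₁mk, hf.homF1.map_mul]
    · intro l
      obtain ⟨a, rfl⟩ := Submodule.Quotient.mk_surjective _ l
      dsimp only
      rw [hdQ2, g₁mk, g₂mk, hf.comm_d2]
    · intro m
      obtain ⟨a, rfl⟩ := Submodule.Quotient.mk_surjective _ m
      dsimp only
      rw [hdQ1, g₁mk]
      exact hf.comm_d1 a
    · intro p l
      obtain ⟨s, rfl⟩ := Submodule.Quotient.mk_surjective _ p
      obtain ⟨a, rfl⟩ := Submodule.Quotient.mk_surjective _ l
      dsimp only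
      rw [hactQ2, g₂mk, g₂mk]
      exact hf.comm_actL s a
    · intro p m
      obtain ⟨s, rfl⟩ := Submodule.Quotient.mk_surjective _ p
      obtain ⟨a, rfl⟩ := Submodule.Quotient.mk_surjective _ m
      dsimp only
      rw [hactQ1, g₁mk, g₁mk]
      exact hf.comm_actM s a
    · intro m m'
      obtain ⟨a, rfl⟩ := Submodule.Quotient.mk_surjective _ m
      obtain ⟨b, rfl⟩ := Submodule.Quotient.mk_surjective _ m'
      dsimp only
      rw [hpfQ, g₂mk, g₁mk, g₁mk, hf.comm_pf]
  · rintro ⟨g2', g1'⟩ ⟨hhom, h2, h1⟩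
    dsimp only at h2 h1
    simp only [Prod.mk.injEq]
    constructor <;> funext x
    · obtain ⟨a, rfl⟩ := Submodule.Quotient.mk_surjective _ x
      rw [h2, g₂mk]
    · obtain ⟨a, rfl⟩ := Submodule.Quotient.mk_surjective _ x
      rw [h1, g₁mk]
end

section
/- Let φ : S → R be an injective morphism of unital commutative k-algebras, 𝒟 = {D₂, D₁, S, ∂₂, ∂₁} a 2-crossed module over S and 𝒞 = {C₂, C₁, R, ∂₂', ∂₁'} a 2-crossed module over R. Let φ_*(𝒟) = {R ⊗_S D₂, R ⊗_S D₁, R, ∂₂*, ∂₁*} be the induced 2-crossed module along φ and φ^*(𝒞) = {C₂, φ*(C₁), S, ∂₂^*, ∂₁^*} the pullback 2-crossed module along φ. Then there are bijections between the following three sets: (1) morphisms of 2-crossed modules of the form (g₂, g₁, id_R) : φ_*(𝒟) → 𝒞; (2) pairs (f₂, f₁) such that (f₂, f₁, φ) : 𝒟 → 𝒞 is a morphism of 2-crossed modules; (3) morphisms of 2-crossed modules of the form (h₂, h₁, id_S) : 𝒟 → φ^*(𝒞). -/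
/-! The first bijection is restriction and extension of scalars. The unit `d ↦ 1 ⊗ d` is a
morphism `𝒟 → φ_*(𝒟)` over `φ`, so composing with it restricts `(g₂, g₁, id_R)`. Conversely
`(f₂, f₁, φ)` extends to `r ⊗ d ↦ r · fᵢ d`, which is `S`-balanced exactly because
`fᵢ (s • d) = φ s · fᵢ d`; every axiom of a morphism is biadditive, so it suffices to check it on
pure tensors, where it is the corresponding axiom for `f`.

The second bijection is the universal property of the fibre product `φ*(C₁) = C₁ ×_R S`:
`f₁` lifts to `m ↦ (f₁ m, ∂₁ m)`, and composing with the first projection, a morphism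
`φ^*(𝒞) → 𝒞` over `φ`, undoes the lift because `∂₁^*` is the second projection. -/
section Morphisms

variable {k : Type*} [CommRing k]

theorem IsAlgHomStr.id {A : Type*} [AddCommGroup A] [Module k A] (mul : A → A → A) :
    IsAlgHomStr k mul mul id :=
  ⟨fun _ _ => rfl, fun _ _ => rfl, fun _ _ => rfl⟩

theorem IsAlgHomStr.comp {A B C : Type*} [AddCommGroup A] [Module k A] [AddCommGroup B]
    [Module k B] [AddCommGroup C] [Module k C] {mulA : A → A → A} {mulB : B → B → B}
    {mulC : C → C → C} {g : B → C} {f : A → B}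
    (hg : IsAlgHomStr k mulB mulC g) (hf : IsAlgHomStr k mulA mulB f) :
    IsAlgHomStr k mulA mulC (g ∘ f) where
  map_add x y := (congrArg g (hf.map_add x y)).trans (hg.map_add _ _)
  map_smul a x := (congrArg g (hf.map_smul a x)).trans (hg.map_smul _ _)
  map_mul x y := (congrArg g (hf.map_mul x y)).trans (hg.map_mul _ _)

variable {L M P L' M' P' L'' M'' P'' : Type*}
  [AddCommGroup L] [Module k L] [AddCommGroup M] [Module k M] [AddCommGroup P] [Module k P]
  [AddCommGroup L'] [Module k L'] [AddCommGroup M'] [Module k M']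
  [AddCommGroup P'] [Module k P']
  [AddCommGroup L''] [Module k L''] [AddCommGroup M''] [Module k M'']
  [AddCommGroup P''] [Module k P'']
  {mulL : L → L → L} {mulM : M → M → M} {mulP : P → P → P} {d2 : L → M} {d1 : M → P}
  {actL : P → L → L} {actM : P → M → M} {pf : M → M → L}
  {mulL' : L' → L' → L'} {mulM' : M' → M' → M'} {mulP' : P' → P' → P'} {d2' : L' → M'}
  {d1' : M' → P'} {actL' : P' → L' → L'} {actM' : P' → M' → M'} {pf' : M' → M' → L'}
  {mulL'' : L'' → L'' → L''} {mulM'' : M'' → M'' → M''} {mulP'' : P'' → P'' → P''}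
  {d2'' : L'' → M''} {d1'' : M'' → P''} {actL'' : P'' → L'' → L''}
  {actM'' : P'' → M'' → M''} {pf'' : M'' → M'' → L''}

theorem IsTwoCrossedModuleHom.comp {g₂ : L' → L''} {g₁ : M' → M''} {g₀ : P' → P''}
    {f₂ : L → L'} {f₁ : M → M'} {f₀ : P → P'}
    (hg : IsTwoCrossedModuleHom k mulL' mulM' mulP' d2' d1' actL' actM' pf'
      mulL'' mulM'' mulP'' d2'' d1'' actL'' actM'' pf'' g₂ g₁ g₀)
    (hf : IsTwoCrossedModuleHom k mulL mulM mulP d2 d1 actL actM pf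
      mulL' mulM' mulP' d2' d1' actL' actM' pf' f₂ f₁ f₀) :
    IsTwoCrossedModuleHom k mulL mulM mulP d2 d1 actL actM pf
      mulL'' mulM'' mulP'' d2'' d1'' actL'' actM'' pf'' (g₂ ∘ f₂) (g₁ ∘ f₁) (g₀ ∘ f₀) where
  homF2 := hg.homF2.comp hf.homF2
  homF1 := hg.homF1.comp hf.homF1
  homF0 := hg.homF0.comp hf.homF0
  comm_d2 l := (congrArg g₁ (hf.comm_d2 l)).trans (hg.comm_d2 _)
  comm_d1 m := (congrArg g₀ (hf.comm_d1 m)).trans (hg.comm_d1 _)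
  comm_actL p l := (congrArg g₂ (hf.comm_actL p l)).trans (hg.comm_actL _ _)
  comm_actM p m := (congrArg g₁ (hf.comm_actM p m)).trans (hg.comm_actM _ _)
  comm_pf m m' := (congrArg g₂ (hf.comm_pf m m')).trans (hg.comm_pf _ _)

end Morphisms

section Actions

variable {k R A : Type*} [CommRing k] [AddCommGroup R] [Module k R] [AddCommGroup A] [Module k A]
  {mulR : R → R → R} {mulA : A → A → A} {act : R → A → A}

theorem IsActionStr.act_mul_act (hact : IsActionStr k mulR mulA act)
    (hA : IsCommAlgebraStr k mulA) (r r' : R) (a b : A) :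
    mulA (act r a) (act r' b) = act (mulR r r') (mulA a b) := by
  rw [← hact.act_mul, hA.comm a, ← hact.act_mul r' b a, hA.comm b, hact.mul_act]

theorem IsTwoCrossedModule.pf_act_act {L M P : Type*} [AddCommGroup L] [Module k L]
    [AddCommGroup M] [Module k M] [AddCommGroup P] [Module k P]
    {mulL : L → L → L} {mulM : M → M → M} {mulP : P → P → P} {d2 : L → M} {d1 : M → P}
    {actL : P → L → L} {actM : P → M → M} {pf : M → M → L}
    (h : IsTwoCrossedModule k mulL mulM mulP d2 d1 actL actM pf) (p p' : P) (m m' : M) :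
    pf (actM p m) (actM p' m') = actL (mulP p p') (pf m m') := by
  rw [h.actionL.mul_act, h.pl5_right p' m m', h.pl5_left p m (actM p' m')]

end Actions

open TensorProduct

section TensorExtension

variable {S R D X : Type*} [CommSemiring S] [AddCommGroup R] [Module S R] [AddCommGroup D]
  [Module S D] [AddCommGroup X]

theorem TensorProduct.ext_of_map_add {f g : R ⊗[S] D → X}
    (hf : ∀ x y, f (x + y) = f x + f y) (hg : ∀ x y, g (x + y) = g x + g y)
    (h : ∀ r d, f (r ⊗ₜ d) = g (r ⊗ₜ d)) : ∀ x, f x = g x := by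
  have hf0 : f 0 = 0 := by simpa using hf 0 0
  have hg0 : g 0 = 0 := by simpa using hg 0 0
  intro x
  induction x using TensorProduct.induction_on with
  | zero => rw [hf0, hg0]
  | tmul r d => exact h r d
  | add x y hx hy => rw [hf, hg, hx, hy]

theorem TensorProduct.map_op_of_tmul {Y : Type*} [AddCommGroup Y]
    {op : R ⊗[S] D → R ⊗[S] D → X} {op' : Y → Y → X} {F : R ⊗[S] D → Y}
    (hop_left : ∀ x x' y, op (x + x') y = op x y + op x' y)
    (hop_right : ∀ x y y', op x (y + y') = op x y + op x y')
    (hop'_left : ∀ a a' b, op' (a + a') b = op' a b + op' a' b)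
    (hop'_right : ∀ a b b', op' a (b + b') = op' a b + op' a b')
    (hF : ∀ x y, F (x + y) = F x + F y)
    (h : ∀ r d r' d', op (r ⊗ₜ d) (r' ⊗ₜ d') = op' (F (r ⊗ₜ d)) (F (r' ⊗ₜ d')))
    (x y : R ⊗[S] D) : op x y = op' (F x) (F y) := by
  have h_tmul (r : R) (d : D) : ∀ y, op (r ⊗ₜ d) y = op' (F (r ⊗ₜ d)) (F y) :=
    ext_of_map_add (hop_right _) (fun b b' => by rw [hF, hop'_right]) (h r d)
  revert x
  exact ext_of_map_add (fun x x' => hop_left x x' y) (fun a a' => by rw [hF, hop'_left])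
    (fun r d => h_tmul r d y)

end TensorExtension

section ExtendScalars

variable {k S R D C : Type*} [CommRing k] [CommRing S] [CommRing R] [Algebra k R] [Algebra S R]
  [AddCommGroup D] [Module S D] [AddCommGroup C] [Module k C]
  {mulC : C → C → C} {act : R → C → C} (hact : IsActionStr k (· * ·) mulC act)

noncomputable def extendScalarsAct (f : D → C) (hf_add : ∀ x y, f (x + y) = f x + f y)
    (hf_act : ∀ (s : S) (d : D), f (s • d) = act (algebraMap S R s) (f d)) :
    R ⊗[S] D →+ C :=
  liftAddHom
    (AddMonoidHom.mk' (fun r => AddMonoidHom.mk' (fun d => act r (f d))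
        (fun d d' => by rw [hf_add, hact.add_right]))
      (fun r r' => AddMonoidHom.ext fun d => hact.add_left r r' (f d)))
    (fun s r d => by
      change act (s • r) (f d) = act r (f (s • d))
      rw [hf_act, Algebra.smul_def, mul_comm, hact.mul_act])

@[simp]
theorem extendScalarsAct_tmul (f : D → C) (hf_add) (hf_act) (r : R) (d : D) :
    extendScalarsAct (S := S) hact f hf_add hf_act (r ⊗ₜ d) = act r (f d) :=
  rfl

theorem extendScalarsAct_comp_one_tmul {g : R ⊗[S] D → C}
    (hg_add : ∀ x y, g (x + y) = g x + g y) (hg_act : ∀ (r : R) x, g (r • x) = act r (g x))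
    (hf_add : ∀ x y, g ((1 : R) ⊗ₜ (x + y)) = g (1 ⊗ₜ x) + g (1 ⊗ₜ y))
    (hf_act : ∀ (s : S) (d : D), g ((1 : R) ⊗ₜ (s • d)) = act (algebraMap S R s) (g (1 ⊗ₜ d))) :
    ∀ x, extendScalarsAct hact (fun d => g ((1 : R) ⊗ₜ d)) hf_add hf_act x = g x :=
  ext_of_map_add (map_add _) hg_add fun r d => by
    rw [extendScalarsAct_tmul, ← hg_act, smul_tmul', smul_eq_mul, mul_one]

variable {f : D → C} (hf_add : ∀ x y, f (x + y) = f x + f y)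
  (hf_act : ∀ (s : S) (d : D), f (s • d) = act (algebraMap S R s) (f d))

theorem extendScalarsAct_one_tmul (d : D) :
    extendScalarsAct hact f hf_add hf_act ((1 : R) ⊗ₜ d) = f d := by
  rw [extendScalarsAct_tmul, ← map_one (algebraMap S R), ← hf_act, one_smul]

theorem extendScalarsAct_smul [Algebra k S] [IsScalarTower k S R] (a : k) :
    ∀ x : R ⊗[S] D,
      extendScalarsAct hact f hf_add hf_act (a • x) = a • extendScalarsAct hact f hf_add hf_act x :=
  ext_of_map_add (fun x y => by rw [smul_add, map_add]) (fun x y => by rw [map_add, smul_add])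
    fun r d => by rw [smul_tmul', extendScalarsAct_tmul, extendScalarsAct_tmul, hact.smul_left]

theorem extendScalarsAct_act (r : R) :
    ∀ x : R ⊗[S] D,
      extendScalarsAct hact f hf_add hf_act (r • x) =
        act r (extendScalarsAct hact f hf_add hf_act x) :=
  ext_of_map_add (fun x y => by rw [smul_add, map_add]) (fun x y => by rw [map_add, hact.add_right])
    fun r' d => by
      rw [smul_tmul', extendScalarsAct_tmul, extendScalarsAct_tmul, smul_eq_mul, hact.mul_act]

end ExtendScalars

structure IsInducedTwoCrossedModuleOps {S R D₂ D₁ : Type*} [CommRing S] [CommRing R] [Algebra S R]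
    [AddCommGroup D₂] [Module S D₂] [AddCommGroup D₁] [Module S D₁]
    (mulD2 : D₂ → D₂ → D₂) (mulD1 : D₁ → D₁ → D₁) (d2 : D₂ → D₁) (d1 : D₁ → S)
    (pf : D₁ → D₁ → D₂) (mul2 : R ⊗[S] D₂ → R ⊗[S] D₂ → R ⊗[S] D₂)
    (mul1 : R ⊗[S] D₁ → R ⊗[S] D₁ → R ⊗[S] D₁) (d2T : R ⊗[S] D₂ → R ⊗[S] D₁)
    (d1T : R ⊗[S] D₁ → R) (pfT : R ⊗[S] D₁ → R ⊗[S] D₁ → R ⊗[S] D₂) : Prop where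
  mul2_tmul : ∀ (r r' : R) (d d' : D₂),
    mul2 (r ⊗ₜ[S] d) (r' ⊗ₜ[S] d') = (r * r') ⊗ₜ[S] mulD2 d d'
  mul1_tmul : ∀ (r r' : R) (d d' : D₁),
    mul1 (r ⊗ₜ[S] d) (r' ⊗ₜ[S] d') = (r * r') ⊗ₜ[S] mulD1 d d'
  d2_tmul : ∀ (r : R) (d : D₂), d2T (r ⊗ₜ[S] d) = r ⊗ₜ[S] d2 d
  d1_tmul : ∀ (r : R) (d : D₁), d1T (r ⊗ₜ[S] d) = r * algebraMap S R (d1 d)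
  pf_tmul : ∀ (r r' : R) (d d' : D₁),
    pfT (r ⊗ₜ[S] d) (r' ⊗ₜ[S] d') = (r * r') ⊗ₜ[S] pf d d'

section InducedModule

variable {k S R D₂ D₁ C₂ C₁ : Type*} [CommRing k] [CommRing S] [CommRing R]
  [Algebra k S] [Algebra k R] [Algebra S R] [IsScalarTower k S R]
  [AddCommGroup D₂] [Module k D₂] [Module S D₂] [AddCommGroup D₁] [Module k D₁] [Module S D₁]
  [AddCommGroup C₂] [Module k C₂] [AddCommGroup C₁] [Module k C₁]
  {mulD2 : D₂ → D₂ → D₂} {mulD1 : D₁ → D₁ → D₁} {d2 : D₂ → D₁} {d1 : D₁ → S}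
  {pf : D₁ → D₁ → D₂}
  {mul2 : R ⊗[S] D₂ → R ⊗[S] D₂ → R ⊗[S] D₂} {mul1 : R ⊗[S] D₁ → R ⊗[S] D₁ → R ⊗[S] D₁}
  {d2T : R ⊗[S] D₂ → R ⊗[S] D₁} {d1T : R ⊗[S] D₁ → R}
  {pfT : R ⊗[S] D₁ → R ⊗[S] D₁ → R ⊗[S] D₂}
  {mulC2 : C₂ → C₂ → C₂} {mulC1 : C₁ → C₁ → C₁} {d2C : C₂ → C₁} {d1C : C₁ → R}
  {actC2 : R → C₂ → C₂} {actC1 : R → C₁ → C₁} {pfC : C₁ → C₁ → C₂}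

theorem isAlgHomStr_algebraMap :
    IsAlgHomStr k (fun a b : S => a * b) (fun a b : R => a * b) (algebraMap S R) :=
  ⟨map_add _, map_smul (IsScalarTower.toAlgHom k S R), map_mul _⟩

theorem one_tmul_smul_eq_algebraMap_smul {D : Type*} [AddCommGroup D] [Module S D] (s : S)
    (d : D) : (1 : R) ⊗ₜ[S] (s • d) = algebraMap S R s • ((1 : R) ⊗ₜ[S] d) := by
  rw [algebraMap_smul, TensorProduct.tmul_smul]

theorem isTwoCrossedModuleHom_one_tmul [IsScalarTower k S D₂] [IsScalarTower k S D₁]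
    (hT : IsInducedTwoCrossedModuleOps mulD2 mulD1 d2 d1 pf mul2 mul1 d2T d1T pfT) :
    IsTwoCrossedModuleHom k mulD2 mulD1 (fun a b : S => a * b) d2 d1
      (fun (s : S) (x : D₂) => s • x) (fun (s : S) (x : D₁) => s • x) pf
      mul2 mul1 (fun a b : R => a * b) d2T d1T
      (fun (r : R) (x : R ⊗[S] D₂) => r • x) (fun (r : R) (x : R ⊗[S] D₁) => r • x) pfT
      (fun d => (1 : R) ⊗ₜ[S] d) (fun d => (1 : R) ⊗ₜ[S] d) (algebraMap S R) where
  homF2 := ⟨tmul_add 1, fun a d => tmul_smul a 1 d,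
    fun d d' => by simp only [hT.mul2_tmul, one_mul]⟩
  homF1 := ⟨tmul_add 1, fun a d => tmul_smul a 1 d,
    fun d d' => by simp only [hT.mul1_tmul, one_mul]⟩
  homF0 := isAlgHomStr_algebraMap
  comm_d2 l := (hT.d2_tmul 1 l).symm
  comm_d1 m := by simp only [hT.d1_tmul, one_mul]
  comm_actL s l := one_tmul_smul_eq_algebraMap_smul s l
  comm_actM s m := one_tmul_smul_eq_algebraMap_smul s m
  comm_pf m m' := by simp only [hT.pf_tmul, one_mul]

theorem isTwoCrossedModuleHom_extendScalarsAct
    (hT : IsInducedTwoCrossedModuleOps mulD2 mulD1 d2 d1 pf mul2 mul1 d2T d1T pfT)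
    (hTmod : IsTwoCrossedModule k mul2 mul1 (fun a b : R => a * b) d2T d1T
      (fun (r : R) (x : R ⊗[S] D₂) => r • x) (fun (r : R) (x : R ⊗[S] D₁) => r • x) pfT)
    (hC : IsTwoCrossedModule k mulC2 mulC1 (fun a b : R => a * b) d2C d1C actC2 actC1 pfC)
    {f₂ : D₂ → C₂} {f₁ : D₁ → C₁}
    (hf : IsTwoCrossedModuleHom k mulD2 mulD1 (fun a b : S => a * b) d2 d1
      (fun (s : S) (x : D₂) => s • x) (fun (s : S) (x : D₁) => s • x) pf
      mulC2 mulC1 (fun a b : R => a * b) d2C d1C actC2 actC1 pfC f₂ f₁ (algebraMap S R)) :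
    IsTwoCrossedModuleHom k mul2 mul1 (fun a b : R => a * b) d2T d1T
      (fun (r : R) (x : R ⊗[S] D₂) => r • x) (fun (r : R) (x : R ⊗[S] D₁) => r • x) pfT
      mulC2 mulC1 (fun a b : R => a * b) d2C d1C actC2 actC1 pfC
      (extendScalarsAct hC.actionL f₂ hf.homF2.map_add hf.comm_actL)
      (extendScalarsAct hC.actionM f₁ hf.homF1.map_add hf.comm_actM) id := by
  set g₂ := extendScalarsAct hC.actionL f₂ hf.homF2.map_add hf.comm_actL
  set g₁ := extendScalarsAct hC.actionM f₁ hf.homF1.map_add hf.comm_actM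
  refine
    { homF2 := ⟨map_add g₂, extendScalarsAct_smul _ _ _, ?_⟩
      homF1 := ⟨map_add g₁, extendScalarsAct_smul _ _ _, ?_⟩
      homF0 := IsAlgHomStr.id _
      comm_d2 := ext_of_map_add (fun x y => by rw [hTmod.homD2.map_add, map_add])
        (fun x y => by rw [map_add, hC.homD2.map_add]) fun r d => ?_
      comm_d1 := ext_of_map_add hTmod.homD1.map_add
        (fun x y => by rw [map_add, hC.homD1.map_add]) fun r d => ?_
      comm_actL := extendScalarsAct_act _ _ _
      comm_actM := extendScalarsAct_act _ _ _
      comm_pf := map_op_of_tmul (fun _ _ _ => by rw [hTmod.pf_add_left, map_add])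
        (fun _ _ _ => by rw [hTmod.pf_add_right, map_add]) hC.pf_add_left hC.pf_add_right
        (map_add g₁) fun r d r' d' => ?_ }
  · exact map_op_of_tmul (fun _ _ _ => by rw [hTmod.algL.add_left, map_add])
      (fun _ _ _ => by rw [hTmod.algL.add_right, map_add]) hC.algL.add_left hC.algL.add_right
      (map_add g₂) fun r d r' d' => by
        simp only [g₂, hT.mul2_tmul, extendScalarsAct_tmul, hf.homF2.map_mul,
          hC.actionL.act_mul_act hC.algL]
  · exact map_op_of_tmul (fun _ _ _ => by rw [hTmod.algM.add_left, map_add])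
      (fun _ _ _ => by rw [hTmod.algM.add_right, map_add]) hC.algM.add_left hC.algM.add_right
      (map_add g₁) fun r d r' d' => by
        simp only [g₁, hT.mul1_tmul, extendScalarsAct_tmul, hf.homF1.map_mul,
          hC.actionM.act_mul_act hC.algM]
  · simp only [g₁, g₂, hT.d2_tmul, extendScalarsAct_tmul, hf.comm_d2, hC.d2_equivariant]
  · simp only [g₁, hT.d1_tmul, extendScalarsAct_tmul, hC.d1_equivariant, hf.comm_d1, id]
  · simp only [g₁, g₂, hT.pf_tmul, extendScalarsAct_tmul, hf.comm_pf, hC.pf_act_act]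

noncomputable def inducedHomEquiv [IsScalarTower k S D₂] [IsScalarTower k S D₁]
    (hT : IsInducedTwoCrossedModuleOps mulD2 mulD1 d2 d1 pf mul2 mul1 d2T d1T pfT)
    (hTmod : IsTwoCrossedModule k mul2 mul1 (fun a b : R => a * b) d2T d1T
      (fun (r : R) (x : R ⊗[S] D₂) => r • x) (fun (r : R) (x : R ⊗[S] D₁) => r • x) pfT)
    (hC : IsTwoCrossedModule k mulC2 mulC1 (fun a b : R => a * b) d2C d1C actC2 actC1 pfC) :
    {g : (R ⊗[S] D₂ → C₂) × (R ⊗[S] D₁ → C₁) //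
      IsTwoCrossedModuleHom k mul2 mul1 (fun a b : R => a * b) d2T d1T
        (fun (r : R) (x : R ⊗[S] D₂) => r • x) (fun (r : R) (x : R ⊗[S] D₁) => r • x) pfT
        mulC2 mulC1 (fun a b : R => a * b) d2C d1C actC2 actC1 pfC g.1 g.2 id} ≃
    {f : (D₂ → C₂) × (D₁ → C₁) //
      IsTwoCrossedModuleHom k mulD2 mulD1 (fun a b : S => a * b) d2 d1
        (fun (s : S) (x : D₂) => s • x) (fun (s : S) (x : D₁) => s • x) pf
        mulC2 mulC1 (fun a b : R => a * b) d2C d1C actC2 actC1 pfC f.1 f.2 (algebraMap S R)} where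
  toFun g := ⟨(fun d => g.1.1 ((1 : R) ⊗ₜ d), fun d => g.1.2 ((1 : R) ⊗ₜ d)),
    g.2.comp (isTwoCrossedModuleHom_one_tmul hT)⟩
  invFun f := ⟨(extendScalarsAct hC.actionL f.1.1 f.2.homF2.map_add f.2.comm_actL,
      extendScalarsAct hC.actionM f.1.2 f.2.homF1.map_add f.2.comm_actM),
    isTwoCrossedModuleHom_extendScalarsAct hT hTmod hC f.2⟩
  left_inv g := Subtype.ext <| Prod.ext
    (funext <| extendScalarsAct_comp_one_tmul _ g.2.homF2.map_add g.2.comm_actL _ _)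
    (funext <| extendScalarsAct_comp_one_tmul _ g.2.homF1.map_add g.2.comm_actM _ _)
  right_inv _ := Subtype.ext <| Prod.ext
    (funext <| extendScalarsAct_one_tmul _ _ _) (funext <| extendScalarsAct_one_tmul _ _ _)

end InducedModule

structure IsPullbackTwoCrossedModuleOps {k S R C₂ C₁ : Type*} [CommRing k] [CommRing S]
    [Algebra k S] [AddCommGroup C₂] [Module k C₂] [AddCommGroup C₁] [Module k C₁]
    {A : Submodule k (C₁ × S)} (φ : S → R) (mulC1 : C₁ → C₁ → C₁) (d2C : C₂ → C₁)
    (d1C : C₁ → R) (actC2 : R → C₂ → C₂) (actC1 : R → C₁ → C₁) (pfC : C₁ → C₁ → C₂)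
    (mulA : A → A → A) (d2p : C₂ → A) (d1p : A → S) (actA : S → A → A)
    (actC2p : S → C₂ → C₂) (pfA : A → A → C₂) : Prop where
  mem_iff : ∀ x : C₁ × S, x ∈ A ↔ d1C x.1 = φ x.2
  mul_coe : ∀ x y : A, (mulA x y : C₁ × S)
    = (mulC1 (x : C₁ × S).1 (y : C₁ × S).1, (x : C₁ × S).2 * (y : C₁ × S).2)
  d2_coe : ∀ c₂ : C₂, (d2p c₂ : C₁ × S) = (d2C c₂, 0)
  d1_eq : ∀ x : A, d1p x = (x : C₁ × S).2
  act_coe : ∀ (s : S) (x : A), (actA s x : C₁ × S)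
    = (actC1 (φ s) (x : C₁ × S).1, s * (x : C₁ × S).2)
  actC2_eq : ∀ (s : S) (c₂ : C₂), actC2p s c₂ = actC2 (φ s) c₂
  pf_eq : ∀ x y : A, pfA x y = pfC (x : C₁ × S).1 (y : C₁ × S).1

section PullbackModule

variable {k S R C₂ C₁ : Type*} [CommRing k] [CommRing S] [CommRing R] [Algebra k S] [Algebra k R]
  [AddCommGroup C₂] [Module k C₂] [AddCommGroup C₁] [Module k C₁] {A : Submodule k (C₁ × S)}
  {φ : S → R} {mulC2 : C₂ → C₂ → C₂} {mulC1 : C₁ → C₁ → C₁} {d2C : C₂ → C₁} {d1C : C₁ → R}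
  {actC2 : R → C₂ → C₂} {actC1 : R → C₁ → C₁} {pfC : C₁ → C₁ → C₂}
  {mulA : A → A → A} {d2p : C₂ → A} {d1p : A → S} {actA : S → A → A}
  {actC2p : S → C₂ → C₂} {pfA : A → A → C₂}

theorem isTwoCrossedModuleHom_pullbackFst
    (hA : IsPullbackTwoCrossedModuleOps φ mulC1 d2C d1C actC2 actC1 pfC
      mulA d2p d1p actA actC2p pfA)
    (hφ : IsAlgHomStr k (fun a b : S => a * b) (fun a b : R => a * b) φ) :
    IsTwoCrossedModuleHom k mulC2 mulA (fun a b : S => a * b) d2p d1p actC2p actA pfA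
      mulC2 mulC1 (fun a b : R => a * b) d2C d1C actC2 actC1 pfC
      id (fun x => (x : C₁ × S).1) φ where
  homF2 := IsAlgHomStr.id _
  homF1 := ⟨fun _ _ => rfl, fun _ _ => rfl, fun x y => by rw [hA.mul_coe]⟩
  homF0 := hφ
  comm_d2 c := by rw [hA.d2_coe]; rfl
  comm_d1 x := by rw [hA.d1_eq, ← (hA.mem_iff x).1 x.2]
  comm_actL := hA.actC2_eq
  comm_actM s x := by rw [hA.act_coe]
  comm_pf := hA.pf_eq

variable {L M : Type*} [AddCommGroup L] [Module k L] [AddCommGroup M] [Module k M]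
  {mulL : L → L → L} {mulM : M → M → M} {d2 : L → M} {d1 : M → S}
  {actL : S → L → L} {actM : S → M → M} {pf : M → M → L}

theorem isTwoCrossedModuleHom_pullbackLift
    (hA : IsPullbackTwoCrossedModuleOps φ mulC1 d2C d1C actC2 actC1 pfC
      mulA d2p d1p actA actC2p pfA)
    (hD : IsTwoCrossedModule k mulL mulM (fun a b : S => a * b) d2 d1 actL actM pf)
    {f₂ : L → C₂} {f₁ : M → C₁}
    (hf : IsTwoCrossedModuleHom k mulL mulM (fun a b : S => a * b) d2 d1 actL actM pf
      mulC2 mulC1 (fun a b : R => a * b) d2C d1C actC2 actC1 pfC f₂ f₁ φ) :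
    IsTwoCrossedModuleHom k mulL mulM (fun a b : S => a * b) d2 d1 actL actM pf
      mulC2 mulA (fun a b : S => a * b) d2p d1p actC2p actA pfA
      f₂ (fun m => ⟨(f₁ m, d1 m), (hA.mem_iff _).2 (hf.comm_d1 m).symm⟩) id where
  homF2 := hf.homF2
  homF1 :=
    { map_add x y := Subtype.ext <| Prod.ext (hf.homF1.map_add x y) (hD.homD1.map_add x y)
      map_smul a x := Subtype.ext <| Prod.ext (hf.homF1.map_smul a x) (hD.homD1.map_smul a x)
      map_mul x y := Subtype.ext <| (hA.mul_coe _ _).symm ▸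
        Prod.ext (hf.homF1.map_mul x y) (hD.homD1.map_mul x y) }
  homF0 := IsAlgHomStr.id _
  comm_d2 l := Subtype.ext <| (hA.d2_coe _).symm ▸ Prod.ext (hf.comm_d2 l) (hD.d1_d2 l)
  comm_d1 m := by rw [hA.d1_eq]; rfl
  comm_actL s l := (hf.comm_actL s l).trans (hA.actC2_eq s _).symm
  comm_actM s m := Subtype.ext <| (hA.act_coe _ _).symm ▸
    Prod.ext (hf.comm_actM s m) (hD.d1_equivariant s m)
  comm_pf m m' := by rw [hA.pf_eq]; exact hf.comm_pf m m'

def pullbackHomEquiv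
    (hA : IsPullbackTwoCrossedModuleOps φ mulC1 d2C d1C actC2 actC1 pfC
      mulA d2p d1p actA actC2p pfA)
    (hφ : IsAlgHomStr k (fun a b : S => a * b) (fun a b : R => a * b) φ)
    (hD : IsTwoCrossedModule k mulL mulM (fun a b : S => a * b) d2 d1 actL actM pf) :
    {f : (L → C₂) × (M → C₁) //
      IsTwoCrossedModuleHom k mulL mulM (fun a b : S => a * b) d2 d1 actL actM pf
        mulC2 mulC1 (fun a b : R => a * b) d2C d1C actC2 actC1 pfC f.1 f.2 φ} ≃
    {p : (L → C₂) × (M → A) //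
      IsTwoCrossedModuleHom k mulL mulM (fun a b : S => a * b) d2 d1 actL actM pf
        mulC2 mulA (fun a b : S => a * b) d2p d1p actC2p actA pfA p.1 p.2 id} where
  toFun f := ⟨(f.1.1, fun m => ⟨(f.1.2 m, d1 m), (hA.mem_iff _).2 (f.2.comm_d1 m).symm⟩),
    isTwoCrossedModuleHom_pullbackLift hA hD f.2⟩
  invFun p := ⟨(p.1.1, fun m => (p.1.2 m : C₁ × S).1),
    (isTwoCrossedModuleHom_pullbackFst hA hφ).comp p.2⟩
  left_inv _ := rfl
  right_inv p := Subtype.ext <| Prod.ext rfl <| funext fun m =>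
    Subtype.ext <| Prod.ext rfl <| (p.2.comm_d1 m).trans (hA.d1_eq _)

end PullbackModule

open TensorProduct in
theorem statement17_general {k S R D₂ D₁ C₂ C₁ : Type*} [CommRing k] [CommRing S] [CommRing R]
    [Algebra k S] [Algebra k R] [Algebra S R] [IsScalarTower k S R]
    (φ : S → R) (hφ : ∀ s : S, φ s = algebraMap S R s)
    (hφadd : ∀ x y : S, φ (x + y) = φ x + φ y)
    (hφsmul : ∀ (a : k) (x : S), φ (a • x) = a • φ x)
    [AddCommGroup D₂] [Module k D₂] [Module S D₂] [IsScalarTower k S D₂]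
    [AddCommGroup D₁] [Module k D₁] [Module S D₁] [IsScalarTower k S D₁]
    [AddCommGroup C₂] [Module k C₂] [AddCommGroup C₁] [Module k C₁]
    (mulD2 : D₂ → D₂ → D₂) (mulD1 : D₁ → D₁ → D₁)
    (d2 : D₂ → D₁) (d1 : D₁ → S) (pf : D₁ → D₁ → D₂)
    (hD : IsTwoCrossedModule k mulD2 mulD1 (fun a b : S => a * b) d2 d1
      (fun (s : S) (x : D₂) => s • x) (fun (s : S) (x : D₁) => s • x) pf)
    (mulC2 : C₂ → C₂ → C₂) (mulC1 : C₁ → C₁ → C₁)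
    (d2C : C₂ → C₁) (d1C : C₁ → R) (actC2 : R → C₂ → C₂) (actC1 : R → C₁ → C₁)
    (pfC : C₁ → C₁ → C₂)
    (hC : IsTwoCrossedModule k mulC2 mulC1 (fun a b : R => a * b) d2C d1C actC2 actC1 pfC) :
    let A := ↥(eqLocusSubmodule k d1C φ hC.homD1.map_add hC.homD1.map_smul hφadd hφsmul)
    ∀ (mul2 : R ⊗[S] D₂ → R ⊗[S] D₂ → R ⊗[S] D₂)
      (mul1 : R ⊗[S] D₁ → R ⊗[S] D₁ → R ⊗[S] D₁)
      (d2T : R ⊗[S] D₂ → R ⊗[S] D₁) (d1T : R ⊗[S] D₁ → R)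
      (pfT : R ⊗[S] D₁ → R ⊗[S] D₁ → R ⊗[S] D₂),
      (∀ (r r' : R) (d d' : D₂),
        mul2 (r ⊗ₜ[S] d) (r' ⊗ₜ[S] d') = (r * r') ⊗ₜ[S] mulD2 d d') →
      (∀ (r r' : R) (d d' : D₁),
        mul1 (r ⊗ₜ[S] d) (r' ⊗ₜ[S] d') = (r * r') ⊗ₜ[S] mulD1 d d') →
      (∀ (r : R) (d : D₂), d2T (r ⊗ₜ[S] d) = r ⊗ₜ[S] d2 d) →
      (∀ (r : R) (d : D₁), d1T (r ⊗ₜ[S] d) = r * φ (d1 d)) →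
      (∀ (r r' : R) (d d' : D₁),
        pfT (r ⊗ₜ[S] d) (r' ⊗ₜ[S] d') = (r * r') ⊗ₜ[S] pf d d') →
      IsTwoCrossedModule k mul2 mul1 (fun a b : R => a * b) d2T d1T
        (fun (r : R) (x : R ⊗[S] D₂) => r • x) (fun (r : R) (x : R ⊗[S] D₁) => r • x)
        pfT →
      ∀ (mulA : A → A → A) (d2p : C₂ → A) (d1p : A → S) (actA : S → A → A)
        (actC2p : S → C₂ → C₂) (pfA : A → A → C₂),
        (∀ x y : A, ((mulA x y : C₁ × S))
            = (mulC1 (x : C₁ × S).1 (y : C₁ × S).1, (x : C₁ × S).2 * (y : C₁ × S).2)) →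
        (∀ c₂ : C₂, ((d2p c₂ : C₁ × S)) = (d2C c₂, 0)) →
        (∀ x : A, d1p x = (x : C₁ × S).2) →
        (∀ (s : S) (x : A), ((actA s x : C₁ × S))
            = (actC1 (φ s) (x : C₁ × S).1, s * (x : C₁ × S).2)) →
        (∀ (s : S) (c₂ : C₂), actC2p s c₂ = actC2 (φ s) c₂) →
        (∀ x y : A, pfA x y = pfC (x : C₁ × S).1 (y : C₁ × S).1) →
        IsTwoCrossedModule k mulC2 mulA (fun a b : S => a * b) d2p d1p actC2p actA pfA →
        Nonempty
          ({g : (R ⊗[S] D₂ → C₂) × (R ⊗[S] D₁ → C₁) //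
              IsTwoCrossedModuleHom k mul2 mul1 (fun a b : R => a * b) d2T d1T
                (fun (r : R) (x : R ⊗[S] D₂) => r • x)
                (fun (r : R) (x : R ⊗[S] D₁) => r • x) pfT
                mulC2 mulC1 (fun a b : R => a * b) d2C d1C actC2 actC1 pfC
                g.1 g.2 id}
            ≃ {f : (D₂ → C₂) × (D₁ → C₁) //
                IsTwoCrossedModuleHom k mulD2 mulD1 (fun a b : S => a * b) d2 d1
                  (fun (s : S) (x : D₂) => s • x) (fun (s : S) (x : D₁) => s • x) pf
                  mulC2 mulC1 (fun a b : R => a * b) d2C d1C actC2 actC1 pfC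
                  f.1 f.2 φ})
        ∧ Nonempty
          ({f : (D₂ → C₂) × (D₁ → C₁) //
              IsTwoCrossedModuleHom k mulD2 mulD1 (fun a b : S => a * b) d2 d1
                (fun (s : S) (x : D₂) => s • x) (fun (s : S) (x : D₁) => s • x) pf
                mulC2 mulC1 (fun a b : R => a * b) d2C d1C actC2 actC1 pfC
                f.1 f.2 φ}
            ≃ {p : (D₂ → C₂) × (D₁ → A) //
                IsTwoCrossedModuleHom k mulD2 mulD1 (fun a b : S => a * b) d2 d1
                  (fun (s : S) (x : D₂) => s • x) (fun (s : S) (x : D₁) => s • x) pf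
                  mulC2 mulA (fun a b : S => a * b) d2p d1p actC2p actA pfA
                  p.1 p.2 id}) := by
  obtain rfl : φ = algebraMap S R := funext hφ
  intro A mul2 mul1 d2T d1T pfT hmul2 hmul1 hd2T hd1T hpfT hT mulA d2p d1p actA actC2p pfA
    hmulA hd2p hd1p hactA hactC2p hpfA _
  exact ⟨⟨inducedHomEquiv ⟨hmul2, hmul1, hd2T, hd1T, hpfT⟩ hT hC⟩,
    ⟨pullbackHomEquiv ⟨fun _ => Iff.rfl, hmulA, hd2p, hd1p, hactA, hactC2p, hpfA⟩
      isAlgHomStr_algebraMap hD⟩⟩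

open TensorProduct in
/-- For an injective morphism `φ : S → R` of unital commutative
`k`-algebras, a 2-crossed module `𝒟 = {D₂, D₁, S}` and a 2-crossed module
`𝒞 = {C₂, C₁, R}`, there are bijections between: (1) morphisms `(g₂, g₁, id_R)` from the
induced 2-crossed module `φ_*(𝒟) = {R ⊗[S] D₂, R ⊗[S] D₁, R}` to `𝒞`; (2) pairs `(f₂, f₁)`
such that `(f₂, f₁, φ) : 𝒟 → 𝒞` is a morphism of 2-crossed modules; (3) morphisms
`(h₂, h₁, id_S)` from `𝒟` to the pullback 2-crossed module `φ^*(𝒞) = {C₂, φ*(C₁), S}`. -/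
theorem statement17 {k S R D₂ D₁ C₂ C₁ : Type*} [CommRing k] [CommRing S] [CommRing R]
    [Algebra k S] [Algebra k R] [Algebra S R] [IsScalarTower k S R]
    (φ : S → R) (hφ : ∀ s : S, φ s = algebraMap S R s) (hinj : Function.Injective φ)
    (hφadd : ∀ x y : S, φ (x + y) = φ x + φ y)
    (hφsmul : ∀ (a : k) (x : S), φ (a • x) = a • φ x)
    [AddCommGroup D₂] [Module k D₂] [Module S D₂] [IsScalarTower k S D₂]
    [AddCommGroup D₁] [Module k D₁] [Module S D₁] [IsScalarTower k S D₁]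
    [AddCommGroup C₂] [Module k C₂] [AddCommGroup C₁] [Module k C₁]
    (mulD2 : D₂ → D₂ → D₂) (mulD1 : D₁ → D₁ → D₁)
    (d2 : D₂ → D₁) (d1 : D₁ → S) (pf : D₁ → D₁ → D₂)
    (hD : IsTwoCrossedModule k mulD2 mulD1 (fun a b : S => a * b) d2 d1
      (fun (s : S) (x : D₂) => s • x) (fun (s : S) (x : D₁) => s • x) pf)
    (mulC2 : C₂ → C₂ → C₂) (mulC1 : C₁ → C₁ → C₁)
    (d2C : C₂ → C₁) (d1C : C₁ → R) (actC2 : R → C₂ → C₂) (actC1 : R → C₁ → C₁)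
    (pfC : C₁ → C₁ → C₂)
    (hC : IsTwoCrossedModule k mulC2 mulC1 (fun a b : R => a * b) d2C d1C actC2 actC1 pfC) :
    let A := ↥(eqLocusSubmodule k d1C φ hC.homD1.map_add hC.homD1.map_smul hφadd hφsmul)
    ∀ (mul2 : R ⊗[S] D₂ → R ⊗[S] D₂ → R ⊗[S] D₂)
      (mul1 : R ⊗[S] D₁ → R ⊗[S] D₁ → R ⊗[S] D₁)
      (d2T : R ⊗[S] D₂ → R ⊗[S] D₁) (d1T : R ⊗[S] D₁ → R)
      (pfT : R ⊗[S] D₁ → R ⊗[S] D₁ → R ⊗[S] D₂),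
      (∀ (r r' : R) (d d' : D₂),
        mul2 (r ⊗ₜ[S] d) (r' ⊗ₜ[S] d') = (r * r') ⊗ₜ[S] mulD2 d d') →
      (∀ (r r' : R) (d d' : D₁),
        mul1 (r ⊗ₜ[S] d) (r' ⊗ₜ[S] d') = (r * r') ⊗ₜ[S] mulD1 d d') →
      (∀ (r : R) (d : D₂), d2T (r ⊗ₜ[S] d) = r ⊗ₜ[S] d2 d) →
      (∀ (r : R) (d : D₁), d1T (r ⊗ₜ[S] d) = r * φ (d1 d)) →
      (∀ (r r' : R) (d d' : D₁),
        pfT (r ⊗ₜ[S] d) (r' ⊗ₜ[S] d') = (r * r') ⊗ₜ[S] pf d d') →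
      IsTwoCrossedModule k mul2 mul1 (fun a b : R => a * b) d2T d1T
        (fun (r : R) (x : R ⊗[S] D₂) => r • x) (fun (r : R) (x : R ⊗[S] D₁) => r • x)
        pfT →
      ∀ (mulA : A → A → A) (d2p : C₂ → A) (d1p : A → S) (actA : S → A → A)
        (actC2p : S → C₂ → C₂) (pfA : A → A → C₂),
        (∀ x y : A, ((mulA x y : C₁ × S))
            = (mulC1 (x : C₁ × S).1 (y : C₁ × S).1, (x : C₁ × S).2 * (y : C₁ × S).2)) →
        (∀ c₂ : C₂, ((d2p c₂ : C₁ × S)) = (d2C c₂, 0)) →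
        (∀ x : A, d1p x = (x : C₁ × S).2) →
        (∀ (s : S) (x : A), ((actA s x : C₁ × S))
            = (actC1 (φ s) (x : C₁ × S).1, s * (x : C₁ × S).2)) →
        (∀ (s : S) (c₂ : C₂), actC2p s c₂ = actC2 (φ s) c₂) →
        (∀ x y : A, pfA x y = pfC (x : C₁ × S).1 (y : C₁ × S).1) →
        IsTwoCrossedModule k mulC2 mulA (fun a b : S => a * b) d2p d1p actC2p actA pfA →
        Nonempty
          ({g : (R ⊗[S] D₂ → C₂) × (R ⊗[S] D₁ → C₁) //
              IsTwoCrossedModuleHom k mul2 mul1 (fun a b : R => a * b) d2T d1T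
                (fun (r : R) (x : R ⊗[S] D₂) => r • x)
                (fun (r : R) (x : R ⊗[S] D₁) => r • x) pfT
                mulC2 mulC1 (fun a b : R => a * b) d2C d1C actC2 actC1 pfC
                g.1 g.2 id}
            ≃ {f : (D₂ → C₂) × (D₁ → C₁) //
                IsTwoCrossedModuleHom k mulD2 mulD1 (fun a b : S => a * b) d2 d1
                  (fun (s : S) (x : D₂) => s • x) (fun (s : S) (x : D₁) => s • x) pf
                  mulC2 mulC1 (fun a b : R => a * b) d2C d1C actC2 actC1 pfC
                  f.1 f.2 φ})
        ∧ Nonempty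
          ({f : (D₂ → C₂) × (D₁ → C₁) //
              IsTwoCrossedModuleHom k mulD2 mulD1 (fun a b : S => a * b) d2 d1
                (fun (s : S) (x : D₂) => s • x) (fun (s : S) (x : D₁) => s • x) pf
                mulC2 mulC1 (fun a b : R => a * b) d2C d1C actC2 actC1 pfC
                f.1 f.2 φ}
            ≃ {p : (D₂ → C₂) × (D₁ → A) //
                IsTwoCrossedModuleHom k mulD2 mulD1 (fun a b : S => a * b) d2 d1
                  (fun (s : S) (x : D₂) => s • x) (fun (s : S) (x : D₁) => s • x) pf
                  mulC2 mulA (fun a b : S => a * b) d2p d1p actC2p actA pfA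
                  p.1 p.2 id}) :=
  statement17_general φ hφ hφadd hφsmul mulD2 mulD1 d2 d1 pf hD mulC2 mulC1 d2C d1C actC2 actC1 pfC
    hC
end

section
/- Let (C₂, C₁, ∂₂) be a crossed module of commutative k-algebras with zero boundary map ∂₂ = 0 (so that, by the Peiffer identity, C₂ has zero multiplication), Y a set and ϑ : Y → C₂ a function, and suppose (C₂, C₁, 0) is a free crossed module on ϑ in the following sense: for every crossed module (C₂', C₁, ∂') over the same base C₁ and every function ϑ' : Y → C₂' with ∂' ∘ ϑ' = 0, there exists a unique morphism of crossed modules over the identity of C₁ (a k-algebra morphism Φ : C₂ → C₂' with ∂' ∘ Φ = 0 and Φ(r·c) = r·Φ(c) for all r ∈ C₁, c ∈ C₂) such that Φ ∘ ϑ = ϑ'. Then C₂ is a free C₁-module on ϑ: for every k-module N equipped with a k-bilinear C₁-action and every function ϑ' : Y → N, there exists a unique k-linear, C₁-equivariant map Φ : C₂ → N with Φ ∘ ϑ = ϑ'. -/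
universe u v w

/-- If `(C₂, C₁, 0)` is a free crossed module on `ϑ : Y → C₂` (with zero
boundary map), then `C₂` is a free `C₁`-module on `ϑ`. -/
theorem statement18 {k : Type u} {C₂ C₁ : Type v} [CommRing k]
    [AddCommGroup C₂] [Module k C₂] [AddCommGroup C₁] [Module k C₁]
    (mulC2 : C₂ → C₂ → C₂) (mulC1 : C₁ → C₁ → C₁) (act : C₁ → C₂ → C₂)
    (h : IsCrossedModule k mulC2 mulC1 (fun _ => (0 : C₁)) act)
    {Y : Type w} (ϑ : Y → C₂)
    (hfree : ∀ (C₂' : Type v) (_ : AddCommGroup C₂') (_ : Module k C₂')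
      (mul' : C₂' → C₂' → C₂') (d' : C₂' → C₁) (act' : C₁ → C₂' → C₂'),
      IsCrossedModule k mul' mulC1 d' act' →
      ∀ ϑ' : Y → C₂', (∀ y : Y, d' (ϑ' y) = 0) →
      ∃! Φ : C₂ → C₂',
        (∀ x y : C₂, Φ (x + y) = Φ x + Φ y)
        ∧ (∀ (a : k) (x : C₂), Φ (a • x) = a • Φ x)
        ∧ (∀ x y : C₂, Φ (mulC2 x y) = mul' (Φ x) (Φ y))
        ∧ (∀ x : C₂, d' (Φ x) = 0)
        ∧ (∀ (r : C₁) (x : C₂), Φ (act r x) = act' r (Φ x))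
        ∧ (∀ y : Y, Φ (ϑ y) = ϑ' y)) :
    ∀ (N : Type v) (_ : AddCommGroup N) (_ : Module k N) (actN : C₁ → N → N),
      (∀ (r r' : C₁) (n : N), actN (r + r') n = actN r n + actN r' n) →
      (∀ (r : C₁) (n n' : N), actN r (n + n') = actN r n + actN r n') →
      (∀ (a : k) (r : C₁) (n : N), actN (a • r) n = a • actN r n) →
      (∀ (a : k) (r : C₁) (n : N), actN r (a • n) = a • actN r n) →
      (∀ (r r' : C₁) (n : N), actN (mulC1 r r') n = actN r (actN r' n)) →
      ∀ ϑ' : Y → N,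
        ∃! Φ : C₂ → N,
          (∀ x y : C₂, Φ (x + y) = Φ x + Φ y)
          ∧ (∀ (a : k) (x : C₂), Φ (a • x) = a • Φ x)
          ∧ (∀ (r : C₁) (x : C₂), Φ (act r x) = actN r (Φ x))
          ∧ (∀ y : Y, Φ (ϑ y) = ϑ' y) := by
  intro N _ _ actN hal har hsl hsr hma ϑ'
  -- auxiliary facts
  have act0 : ∀ r : C₁, actN r 0 = 0 := by
    intro r
    have := har r 0 0
    simpa using this.symm
  have mulC2_zero : ∀ x y : C₂, mulC2 x y = 0 := by
    intro x y
    have hp := h.peiffer x y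
    have h2 := h.action.add_left 0 0 y
    simp only [add_zero] at h2
    have h0 : act (0 : C₁) y = 0 := add_eq_right.mp h2.symm
    rw [← hp]; exact h0
  have mulC1_zero_right : ∀ r : C₁, mulC1 r 0 = 0 := by
    intro r
    have h2 := h.algR.add_right r 0 0
    simp only [add_zero] at h2
    exact (add_eq_left.mp h2.symm)
  have actN0 : ∀ n : N, actN (0 : C₁) n = 0 := by
    intro n
    have h2 := hal 0 0 n
    simp only [add_zero] at h2
    exact (add_eq_left.mp h2.symm)
  -- build the crossed module (N, C₁, 0) with zero multiplication
  have hcm : IsCrossedModule k (fun (_ _ : N) => (0 : N)) mulC1 (fun _ => (0 : C₁)) actN := by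
    refine ⟨⟨?_, ?_, ?_, ?_, ?_⟩, ?_⟩
    · exact ⟨fun _ _ => rfl, fun _ _ _ => rfl, fun _ _ _ => by simp,
        fun _ _ _ => by simp, fun _ _ _ => by simp, fun _ _ _ => by simp⟩
    · exact h.algR
    · exact ⟨fun _ _ => by simp, fun _ _ => by simp,
        fun _ _ => (mulC1_zero_right 0).symm⟩
    · exact ⟨hal, har, hsl, hsr, hma, fun r x y => act0 r⟩
    · intro r c; exact (mulC1_zero_right r).symm
    · intro c c'; exact actN0 c'
  obtain ⟨Φ, ⟨hadd, hsmul, _, _, hact, hϑ⟩, huniq⟩ :=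
    hfree N ‹_› ‹_› (fun _ _ => (0 : N)) (fun _ => (0 : C₁)) actN hcm ϑ' (fun _ => rfl)
  refine ⟨Φ, ⟨hadd, hsmul, hact, hϑ⟩, ?_⟩
  rintro Φ' ⟨hadd', hsmul', hact', hϑ'⟩
  have hΦ'0 : Φ' 0 = 0 := by
    have := hadd' 0 0
    simp only [add_zero] at this
    exact (add_eq_left.mp this.symm)
  exact huniq Φ' ⟨hadd', hsmul',
    fun x y => by rw [mulC2_zero x y]; exact hΦ'0,
    fun _ => rfl, hact', hϑ'⟩
end
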